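/- arXiv:1304.1703 — 5 statements merged into one kernel-verified Lean document; each statement's English description precedes it below -/
import Mathlib

section
/- Let c>0 and let F(μ,d)=∫₀¹(μ²−λ²d²)·√((1−λ²)/(c²−λ²d²)) dλ. Then for every ξ∈[−c²/2, c²/3] there exists a unique d∈[0,c] and μ∈[0,d] with F(μ,d)=0 and c²/2+ξ=μ²+d²/2; the resulting map f:[−c²/2,c²/3]→[0,c], f(ξ)=d, is continuous and strictly increasing with f(−c²/2)=0 and f(c²/3)=c, and the map d↦μ(d) is continuous and strictly increasing on [0,c] with μ(0)=0 and μ(c)=c/√3. -/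
/-- `F(μ,d) = ∫₀¹ (μ² − λ²d²)·√((1−λ²)/(c²−λ²d²)) dλ`. -/
noncomputable def Ffun (c μ d : ℝ) : ℝ :=
  ∫ l in (0:ℝ)..1, (μ^2 - l^2 * d^2) * Real.sqrt ((1 - l^2) / (c^2 - l^2 * d^2))

/-!
Write `w_d(l) = √((1 - l²)/(c² - l²d²))` and `M_n(d) = ∫₀¹ lⁿ w_d(l) dl`. Then
`F(μ, d) = μ² M₀(d) - d² M₂(d)`, so the only root `μ ≥ 0` is `μ(d) = d √(M₂(d)/M₀(d))`; it is
continuous by dominated convergence (`w_d ≤ 1/c`), `μ(0) = 0`, and `w_c ≡ 1/c` gives `μ(c) = c/√3`.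

Monotonicity of `μ` is a single-crossing argument. For `d₁ < d₂` the ratio `w_{d₂}/w_{d₁}` is
nondecreasing in `l`, while `μ(d₁)² - l²d₁²` changes sign exactly once, at `l₀ = μ(d₁)/d₁`.
Comparing the ratio with its value at `l₀` under the integral turns `F(μ(d₁), d₁) = 0` into
`μ(d₁)² M₀(d₂) ≤ d₁² M₂(d₂) < d₂² M₂(d₂)`, i.e. `μ(d₁) < μ(d₂)`.

Hence `ξ(d) = μ(d)² + d²/2 - c²/2` is a continuous increasing bijection `[0, c] → [-c²/2, c²/3]`,
and `f` is its inverse.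
-/

open Set Function Filter Topology MeasureTheory intervalIntegral

section InverseOfStrictMono

variable {α β : Type*} [LinearOrder α] [LinearOrder β]

theorem StrictMonoOn.strictMonoOn_invFunOn [Nonempty α] {g : α → β} {s : Set α} {t : Set β}
    (hg : StrictMonoOn g s) (hsurj : SurjOn g s t) : StrictMonoOn (invFunOn g s) t := by
  intro y₁ hy₁ y₂ hy₂ hlt
  rwa [← hg.lt_iff_lt (hsurj.mapsTo_invFunOn hy₁) (hsurj.mapsTo_invFunOn hy₂),
    hsurj.rightInvOn_invFunOn hy₁, hsurj.rightInvOn_invFunOn hy₂]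

theorem StrictMonoOn.continuousOn_Icc_of_surjOn [TopologicalSpace α] [OrderTopology α]
    [TopologicalSpace β] [OrderTopology β] [DenselyOrdered β] {f : α → β} {a b : α}
    (hf : StrictMonoOn f (Icc a b)) (hsurj : SurjOn f (Icc a b) (Icc (f a) (f b))) :
    ContinuousOn f (Icc a b) := by
  intro x hx
  rw [← Icc_union_Icc_eq_Icc hx.1 hx.2]
  refine ContinuousWithinAt.union ?_ ?_
  · rcases hx.1.eq_or_lt with rfl | hax
    · simp
    refine (hf.continuousWithinAt_left_of_image_mem_nhdsWithin
      (Icc_mem_nhdsLE_of_mem ⟨hax, hx.2⟩) (mem_of_superset ?_ hsurj)).mono Icc_subset_Iic_self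
    exact Icc_mem_nhdsLE_of_mem ⟨hf (left_mem_Icc.2 (hax.le.trans hx.2)) hx hax, hf.monotoneOn hx
      (right_mem_Icc.2 (hax.le.trans hx.2)) hx.2⟩
  · rcases hx.2.eq_or_lt with rfl | hxb
    · simp
    refine (hf.continuousWithinAt_right_of_image_mem_nhdsWithin
      (Icc_mem_nhdsGE_of_mem ⟨hx.1, hxb⟩) (mem_of_superset ?_ hsurj)).mono Icc_subset_Ici_self
    exact Icc_mem_nhdsGE_of_mem ⟨hf.monotoneOn (left_mem_Icc.2 (hx.1.trans hxb.le)) hx hx.1,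
      hf hx (right_mem_Icc.2 (hx.1.trans hxb.le)) hxb⟩

theorem StrictMonoOn.continuousOn_invFunOn_Icc [Nonempty α] [TopologicalSpace α] [OrderTopology α]
    [DenselyOrdered α] [TopologicalSpace β] [OrderTopology β] {g : α → β} {a b : α} (hab : a ≤ b)
    (hg : StrictMonoOn g (Icc a b)) (hsurj : SurjOn g (Icc a b) (Icc (g a) (g b))) :
    ContinuousOn (invFunOn g (Icc a b)) (Icc (g a) (g b)) := by
  have hleft := hg.injOn.leftInvOn_invFunOn
  refine (hg.strictMonoOn_invFunOn hsurj).continuousOn_Icc_of_surjOn ?_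
  rw [hleft (left_mem_Icc.2 hab), hleft (right_mem_Icc.2 hab)]
  exact hleft.surjOn hg.monotoneOn.mapsTo_Icc

end InverseOfStrictMono

namespace Ffun

noncomputable def weight (c d l : ℝ) : ℝ := √((1 - l ^ 2) / (c ^ 2 - l ^ 2 * d ^ 2))

noncomputable def moment (c d : ℝ) (n : ℕ) : ℝ := ∫ l in (0 : ℝ)..1, l ^ n * weight c d l

section Weight

variable {c d l : ℝ}

@[simp] lemma weight_one (c d : ℝ) : weight c d 1 = 0 := by simp [weight]

lemma weight_nonneg (c d l : ℝ) : 0 ≤ weight c d l := Real.sqrt_nonneg _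

lemma measurable_weight (c d : ℝ) : Measurable (weight c d) := by
  unfold weight; fun_prop

lemma sq_sub_sq_mul_sq_pos (hc : 0 < c) (hd : d ∈ Icc 0 c) (hl : l ∈ Ico 0 1) :
    0 < c ^ 2 - l ^ 2 * d ^ 2 := by
  have hdc : l ^ 2 * d ^ 2 ≤ l ^ 2 * c ^ 2 := by gcongr; exacts [hd.1, hd.2]
  have hl2 : 0 < (1 - l ^ 2) * c ^ 2 := mul_pos (by nlinarith [hl.1, hl.2]) (by positivity)
  linarith

lemma weight_pos (hc : 0 < c) (hd : d ∈ Icc 0 c) (hl : l ∈ Ico 0 1) : 0 < weight c d l :=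
  Real.sqrt_pos.2 <| div_pos (by nlinarith [hl.1, hl.2]) (sq_sub_sq_mul_sq_pos hc hd hl)

lemma weight_le (hc : 0 < c) (hd : d ∈ Icc 0 c) (hl : l ∈ Icc 0 1) : weight c d l ≤ c⁻¹ := by
  rcases hl.2.eq_or_lt with rfl | hl1
  · simp [hc.le]
  have hB := sq_sub_sq_mul_sq_pos hc hd ⟨hl.1, hl1⟩
  have hdc : l ^ 2 * d ^ 2 ≤ l ^ 2 * c ^ 2 := by gcongr; exacts [hd.1, hd.2]
  rw [weight, Real.sqrt_le_iff, inv_pow, div_le_iff₀ hB, inv_mul_eq_div,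
    le_div_iff₀ (by positivity)]
  exact ⟨by positivity, by linarith⟩

lemma weight_self (hc : 0 < c) (hl : l ∈ Ico 0 1) : weight c c l = c⁻¹ := by
  have h1 : 0 < 1 - l ^ 2 := by nlinarith [hl.1, hl.2]
  rw [weight, show c ^ 2 - l ^ 2 * c ^ 2 = (1 - l ^ 2) * c ^ 2 by ring, div_mul_eq_div_div,
    div_self h1.ne', one_div, Real.sqrt_inv, Real.sqrt_sq hc.le]

lemma intervalIntegrable_weight (hc : 0 < c) (hd : d ∈ Icc 0 c) :
    IntervalIntegrable (weight c d) volume 0 1 := by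
  rw [intervalIntegrable_iff_integrableOn_Ioc_of_le zero_le_one]
  refine Measure.integrableOn_of_bounded (M := c⁻¹) (by simp)
    (measurable_weight c d).aestronglyMeasurable ?_
  refine (ae_restrict_iff' measurableSet_Ioc).2 (ae_of_all _ fun l hl => ?_)
  rw [Real.norm_of_nonneg (weight_nonneg c d l)]
  exact weight_le hc hd (Ioc_subset_Icc_self hl)

lemma intervalIntegrable_mul_weight {p : ℝ → ℝ} (hp : Continuous p) (hc : 0 < c)
    (hd : d ∈ Icc 0 c) : IntervalIntegrable (fun l => p l * weight c d l) volume 0 1 :=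
  (intervalIntegrable_weight hc hd).continuousOn_mul hp.continuousOn

lemma integral_mul_weight_pos {p : ℝ → ℝ} (hp : Continuous p) (hpos : ∀ l ∈ Ioo 0 1, 0 < p l)
    (hc : 0 < c) (hd : d ∈ Icc 0 c) : 0 < ∫ l in (0 : ℝ)..1, p l * weight c d l :=
  intervalIntegral_pos_of_pos_on (intervalIntegrable_mul_weight hp hc hd)
    (fun l hl => mul_pos (hpos l hl) (weight_pos hc hd (Ioo_subset_Ico_self hl))) zero_lt_one

end Weight

section Moment

variable {c d : ℝ}

lemma moment_pos (hc : 0 < c) (hd : d ∈ Icc 0 c) (n : ℕ) : 0 < moment c d n :=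
  integral_mul_weight_pos (continuous_pow n) (fun _ hl => pow_pos hl.1 n) hc hd

lemma integral_sub_sq_mul_weight (hc : 0 < c) (hd : d ∈ Icc 0 c) (a b : ℝ) :
    ∫ l in (0 : ℝ)..1, (a - l ^ 2 * b) * weight c d l = a * moment c d 0 - b * moment c d 2 := by
  have hI := fun n => intervalIntegrable_mul_weight (continuous_pow n) hc hd
  rw [moment, moment, ← intervalIntegral.integral_const_mul,
    ← intervalIntegral.integral_const_mul, ← integral_sub ((hI 0).const_mul a) ((hI 2).const_mul b)]
  congr 1; ext l; ring

lemma eq_moment (hc : 0 < c) (hd : d ∈ Icc 0 c) (μ : ℝ) :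
    Ffun c μ d = μ ^ 2 * moment c d 0 - d ^ 2 * moment c d 2 :=
  integral_sub_sq_mul_weight hc hd _ _

lemma moment_two_lt_moment_zero (hc : 0 < c) (hd : d ∈ Icc 0 c) :
    moment c d 2 < moment c d 0 := by
  have h := integral_mul_weight_pos (p := fun l => 1 - l ^ 2 * 1) (by fun_prop)
    (fun l hl => by nlinarith [hl.1, hl.2]) hc hd
  rw [integral_sub_sq_mul_weight hc hd] at h
  linarith

lemma moment_self (hc : 0 < c) (n : ℕ) : moment c c n = c⁻¹ / (n + 1) := by
  have h : ∫ l in Ioo (0 : ℝ) 1, l ^ n * weight c c l = ∫ l in Ioo (0 : ℝ) 1, l ^ n * c⁻¹ :=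
    setIntegral_congr_fun measurableSet_Ioo fun l hl => by
      rw [weight_self hc (Ioo_subset_Ico_self hl)]
  rw [moment, integral_of_le zero_le_one, integral_Ioc_eq_integral_Ioo, h,
    ← integral_Ioc_eq_integral_Ioo, ← integral_of_le zero_le_one,
    intervalIntegral.integral_mul_const, integral_pow]
  simp [div_eq_mul_inv, mul_comm]

lemma continuousOn_moment (hc : 0 < c) (n : ℕ) :
    ContinuousOn (fun d => moment c d n) (Icc 0 c) := by
  intro d₀ hd₀
  refine continuousWithinAt_of_dominated_interval (bound := fun _ => c⁻¹)
    (Eventually.of_forall fun d =>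
      ((continuous_pow n).measurable.mul (measurable_weight c d)).aestronglyMeasurable) ?_
    intervalIntegrable_const (ae_of_all _ fun l hl => ?_)
  · filter_upwards [self_mem_nhdsWithin] with d hd
    refine ae_of_all _ fun l hl => ?_
    rw [uIoc_of_le zero_le_one] at hl
    rw [Real.norm_of_nonneg (mul_nonneg (pow_nonneg hl.1.le n) (weight_nonneg c d l))]
    calc l ^ n * weight c d l ≤ 1 * c⁻¹ :=
          mul_le_mul (pow_le_one₀ hl.1.le hl.2) (weight_le hc hd (Ioc_subset_Icc_self hl))
            (weight_nonneg c d l) zero_le_one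
      _ = c⁻¹ := one_mul _
  · rw [uIoc_of_le zero_le_one] at hl
    rcases hl.2.eq_or_lt with rfl | hl1
    · simpa using continuousWithinAt_const
    have hw : ContinuousAt (fun d => weight c d l) d₀ :=
      (continuousAt_const.div (f := fun _ => 1 - l ^ 2) (g := fun d => c ^ 2 - l ^ 2 * d ^ 2)
        (by fun_prop) (sq_sub_sq_mul_sq_pos hc hd₀ ⟨hl.1.le, hl1⟩).ne').sqrt
    exact (continuousAt_const.mul hw).continuousWithinAt

end Moment

noncomputable def mu (c d : ℝ) : ℝ := d * √(moment c d 2 / moment c d 0)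

section Mu

variable {c d : ℝ}

@[simp] lemma mu_zero (c : ℝ) : mu c 0 = 0 := by simp [mu]

lemma mu_nonneg (hd : 0 ≤ d) : 0 ≤ mu c d := mul_nonneg hd (Real.sqrt_nonneg _)

lemma mu_pos (hc : 0 < c) (hd : d ∈ Ioc 0 c) : 0 < mu c d :=
  mul_pos hd.1 <| Real.sqrt_pos.2 <|
    div_pos (moment_pos hc (Ioc_subset_Icc_self hd) 2) (moment_pos hc (Ioc_subset_Icc_self hd) 0)

lemma mu_sq (hc : 0 < c) (hd : d ∈ Icc 0 c) :
    mu c d ^ 2 = d ^ 2 * moment c d 2 / moment c d 0 := by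
  rw [mu, mul_pow, Real.sq_sqrt (div_nonneg (moment_pos hc hd 2).le (moment_pos hc hd 0).le),
    mul_div_assoc]

lemma eq_zero_iff_eq_mu (hc : 0 < c) (hd : d ∈ Icc 0 c) {μ : ℝ} (hμ : 0 ≤ μ) :
    Ffun c μ d = 0 ↔ μ = mu c d := by
  rw [← sq_eq_sq₀ hμ (mu_nonneg hd.1), mu_sq hc hd, eq_div_iff (moment_pos hc hd 0).ne',
    eq_moment hc hd, sub_eq_zero]

lemma mu_lt (hc : 0 < c) (hd : d ∈ Ioc 0 c) : mu c d < d := by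
  have hd' := Ioc_subset_Icc_self hd
  have h : mu c d ^ 2 < d ^ 2 := by
    rw [mu_sq hc hd', div_lt_iff₀ (moment_pos hc hd' 0)]
    exact mul_lt_mul_of_pos_left (moment_two_lt_moment_zero hc hd') (pow_pos hd.1 2)
  exact lt_of_pow_lt_pow_left₀ 2 hd.1.le h

lemma mu_le (hc : 0 < c) (hd : d ∈ Icc 0 c) : mu c d ≤ d := by
  rcases hd.1.eq_or_lt with rfl | hd0
  · simp
  · exact (mu_lt hc ⟨hd0, hd.2⟩).le

lemma mu_self (hc : 0 < c) : mu c c = c / √3 := by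
  have h : moment c c 2 / moment c c 0 = 3⁻¹ := by
    rw [moment_self hc, moment_self hc]; field_simp; norm_num
  rw [mu, h, Real.sqrt_inv, div_eq_mul_inv]

lemma continuousOn_mu (hc : 0 < c) : ContinuousOn (mu c) (Icc 0 c) :=
  continuousOn_id.mul ((continuousOn_moment hc 2).div (continuousOn_moment hc 0)
    fun _ hd => (moment_pos hc hd 0).ne').sqrt

end Mu

section Monotonicity

variable {c d₁ d₂ : ℝ}

-- `weight c d₂ / weight c d₁` is nondecreasing in `l`, stated without division.
lemma weight_mul_weight_le (hc : 0 < c) (hd₁ : 0 ≤ d₁) (hd₁₂ : d₁ ≤ d₂) (hd₂ : d₂ ≤ c)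
    {l l' : ℝ} (hl : 0 ≤ l) (hll' : l ≤ l') (hl' : l' ≤ 1) :
    weight c d₂ l * weight c d₁ l' ≤ weight c d₂ l' * weight c d₁ l := by
  rcases hl'.eq_or_lt with rfl | hl'1
  · simp
  have md₁ : d₁ ∈ Icc 0 c := ⟨hd₁, hd₁₂.trans hd₂⟩
  have md₂ : d₂ ∈ Icc 0 c := ⟨hd₁.trans hd₁₂, hd₂⟩
  have ml : l ∈ Ico 0 1 := ⟨hl, hll'.trans_lt hl'1⟩
  have ml' : l' ∈ Ico 0 1 := ⟨hl.trans hll', hl'1⟩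
  have hA : 0 ≤ 1 - l ^ 2 := by nlinarith
  have hA' : 0 ≤ 1 - l' ^ 2 := by nlinarith
  simp only [weight]
  rw [← Real.sqrt_mul (div_nonneg hA (sq_sub_sq_mul_sq_pos hc md₂ ml).le),
    ← Real.sqrt_mul (div_nonneg hA' (sq_sub_sq_mul_sq_pos hc md₂ ml').le), div_mul_div_comm,
    div_mul_div_comm, mul_comm (1 - l' ^ 2)]
  refine Real.sqrt_le_sqrt (div_le_div_of_nonneg_left (mul_nonneg hA hA')
    (mul_pos (sq_sub_sq_mul_sq_pos hc md₂ ml') (sq_sub_sq_mul_sq_pos hc md₁ ml)) ?_)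
  have hl2 : l ^ 2 ≤ l' ^ 2 := pow_le_pow_left₀ hl hll' 2
  have hd2 : d₁ ^ 2 ≤ d₂ ^ 2 := pow_le_pow_left₀ hd₁ hd₁₂ 2
  linear_combination mul_nonneg (mul_nonneg (sq_nonneg c) (sub_nonneg.2 hl2)) (sub_nonneg.2 hd2)

lemma sq_sub_sq_mul_weight_mul_weight_le (hc : 0 < c) (hd₁ : 0 ≤ d₁) (hd₁₂ : d₁ ≤ d₂)
    (hd₂ : d₂ ≤ c) {l₀ l : ℝ} (hl₀ : l₀ ∈ Icc 0 1) (hl : l ∈ Icc 0 1) :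
    (l₀ ^ 2 - l ^ 2) * (weight c d₂ l * weight c d₁ l₀) ≤
      (l₀ ^ 2 - l ^ 2) * (weight c d₂ l₀ * weight c d₁ l) := by
  rcases le_total l l₀ with h | h
  · exact mul_le_mul_of_nonneg_left (weight_mul_weight_le hc hd₁ hd₁₂ hd₂ hl.1 h hl₀.2)
      (sub_nonneg.2 (pow_le_pow_left₀ hl.1 h 2))
  · exact mul_le_mul_of_nonpos_left (weight_mul_weight_le hc hd₁ hd₁₂ hd₂ hl₀.1 h hl.2)
      (sub_nonpos.2 (pow_le_pow_left₀ hl₀.1 h 2))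

lemma mu_strictMonoOn (hc : 0 < c) : StrictMonoOn (mu c) (Icc 0 c) := by
  intro d₁ hd₁ d₂ hd₂ h12
  rcases hd₁.1.eq_or_lt with rfl | hd₁pos
  · rw [mu_zero]; exact mu_pos hc ⟨h12, hd₂.2⟩
  set l₀ := mu c d₁ / d₁
  have hl₀ : l₀ ∈ Ico 0 1 :=
    ⟨div_nonneg (mu_nonneg hd₁.1) hd₁.1, (div_lt_one hd₁pos).2 (mu_lt hc ⟨hd₁pos, hd₁.2⟩)⟩
  have hμ : mu c d₁ = l₀ * d₁ := (div_mul_cancel₀ _ hd₁pos.ne').symm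
  have key : weight c d₁ l₀ * (mu c d₁ ^ 2 * moment c d₂ 0 - d₁ ^ 2 * moment c d₂ 2) ≤
      weight c d₂ l₀ * Ffun c (mu c d₁) d₁ := by
    rw [eq_moment hc hd₁, ← integral_sub_sq_mul_weight hc hd₁, ← integral_sub_sq_mul_weight hc hd₂,
      ← intervalIntegral.integral_const_mul, ← intervalIntegral.integral_const_mul]
    refine integral_mono_on zero_le_one
      ((intervalIntegrable_mul_weight (by fun_prop) hc hd₂).const_mul _)
      ((intervalIntegrable_mul_weight (by fun_prop) hc hd₁).const_mul _) fun l hl => ?_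
    have h := mul_le_mul_of_nonneg_left (sq_sub_sq_mul_weight_mul_weight_le hc hd₁.1 h12.le hd₂.2
      (Ico_subset_Icc_self hl₀) hl) (sq_nonneg d₁)
    rw [hμ]
    linear_combination h
  rw [(eq_zero_iff_eq_mu hc hd₁ (mu_nonneg hd₁.1)).2 rfl, mul_zero] at key
  have h₂ : mu c d₁ ^ 2 * moment c d₂ 0 ≤ d₁ ^ 2 * moment c d₂ 2 :=
    sub_nonpos.1 (nonpos_of_mul_nonpos_right key (weight_pos hc hd₁ hl₀))
  have hsq : mu c d₁ ^ 2 < mu c d₂ ^ 2 := by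
    rw [mu_sq hc hd₂, lt_div_iff₀ (moment_pos hc hd₂ 0)]
    have := mul_lt_mul_of_pos_right (pow_lt_pow_left₀ h12 hd₁.1 two_ne_zero) (moment_pos hc hd₂ 2)
    linarith
  exact lt_of_pow_lt_pow_left₀ 2 (mu_nonneg hd₂.1) hsq

end Monotonicity

noncomputable def xi (c d : ℝ) : ℝ := mu c d ^ 2 + d ^ 2 / 2 - c ^ 2 / 2

section Xi

variable {c : ℝ}

lemma xi_zero (c : ℝ) : xi c 0 = -c ^ 2 / 2 := by simp [xi]; ring

lemma xi_self (hc : 0 < c) : xi c c = c ^ 2 / 3 := by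
  rw [xi, mu_self hc, div_pow, Real.sq_sqrt zero_le_three]; ring

lemma xi_strictMonoOn (hc : 0 < c) : StrictMonoOn (xi c) (Icc 0 c) := by
  intro d₁ hd₁ d₂ hd₂ h12
  have hμ := mu_strictMonoOn hc hd₁ hd₂ h12
  have := pow_lt_pow_left₀ hμ (mu_nonneg hd₁.1) two_ne_zero
  have := pow_lt_pow_left₀ h12 hd₁.1 two_ne_zero
  simp only [xi]; linarith

lemma xi_surjOn (hc : 0 < c) : SurjOn (xi c) (Icc 0 c) (Icc (-c ^ 2 / 2) (c ^ 2 / 3)) := by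
  rw [← xi_zero, ← xi_self hc]
  have hcont : ContinuousOn (xi c) (Icc 0 c) :=
    (((continuousOn_mu hc).pow 2).add ((continuousOn_id.pow 2).div_const 2)).sub continuousOn_const
  exact intermediate_value_Icc hc.le hcont

end Xi

end Ffun

open Ffun

theorem stmt0 (c : ℝ) (hc : 0 < c) :
    ∃ f μf : ℝ → ℝ,
      (∀ ξ ∈ Set.Icc (-c^2/2) (c^2/3),
        f ξ ∈ Set.Icc 0 c ∧ μf (f ξ) ∈ Set.Icc 0 (f ξ) ∧
        Ffun c (μf (f ξ)) (f ξ) = 0 ∧ c^2/2 + ξ = (μf (f ξ))^2 + (f ξ)^2/2) ∧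
      (∀ ξ ∈ Set.Icc (-c^2/2) (c^2/3), ∀ d μ : ℝ,
        d ∈ Set.Icc 0 c → μ ∈ Set.Icc 0 d → Ffun c μ d = 0 →
        c^2/2 + ξ = μ^2 + d^2/2 → d = f ξ ∧ μ = μf (f ξ)) ∧
      ContinuousOn f (Set.Icc (-c^2/2) (c^2/3)) ∧
      StrictMonoOn f (Set.Icc (-c^2/2) (c^2/3)) ∧
      f (-c^2/2) = 0 ∧ f (c^2/3) = c ∧
      ContinuousOn μf (Set.Icc 0 c) ∧
      StrictMonoOn μf (Set.Icc 0 c) ∧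
      μf 0 = 0 ∧ μf c = c / Real.sqrt 3 := by
  set f := invFunOn (xi c) (Icc 0 c)
  have hsurj := xi_surjOn hc
  have hleft : LeftInvOn f (xi c) (Icc 0 c) := (xi_strictMonoOn hc).injOn.leftInvOn_invFunOn
  have hcont := (xi_strictMonoOn hc).continuousOn_invFunOn_Icc hc.le (by rwa [xi_zero, xi_self hc])
  rw [xi_zero, xi_self hc] at hcont
  refine ⟨f, mu c, fun ξ hξ => ?_, fun ξ hξ d μ hd hμ hF hξd => ?_, hcont,
    (xi_strictMonoOn hc).strictMonoOn_invFunOn hsurj, ?_, ?_, continuousOn_mu hc,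
    mu_strictMonoOn hc, mu_zero c, mu_self hc⟩
  · have hd := hsurj.mapsTo_invFunOn hξ
    have hxi := hsurj.rightInvOn_invFunOn hξ
    refine ⟨hd, ⟨mu_nonneg hd.1, mu_le hc hd⟩,
      (eq_zero_iff_eq_mu hc hd (mu_nonneg hd.1)).2 rfl, ?_⟩
    simp only [xi] at hxi; linarith
  · obtain rfl := (eq_zero_iff_eq_mu hc hd hμ.1).1 hF
    have hdf : d = f ξ := (xi_strictMonoOn hc).injOn hd (hsurj.mapsTo_invFunOn hξ) <| by
      rw [hsurj.rightInvOn_invFunOn hξ, xi]; linarith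
    exact ⟨hdf, hdf ▸ rfl⟩
  · simpa only [xi_zero] using hleft (left_mem_Icc.2 hc.le)
  · simpa only [xi_self hc] using hleft (right_mem_Icc.2 hc.le)
end

section
/- Let c>0 and F(μ,d)=∫₀¹(μ²−λ²d²)·√((1−λ²)/(c²−λ²d²)) dλ. For 0<μ<d<c, F is strictly increasing in μ (for fixed d) and strictly decreasing in d (for fixed μ). Consequently, if μ(d)∈(0,d) is defined by F(μ(d),d)=0, then μ(d) is strictly increasing in d on (0,c). -/
lemma Ffun_integrable (c μ d : ℝ) (hd : 0 ≤ d) (hdc : d < c) :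
    IntervalIntegrable
      (fun l => (μ^2 - l^2 * d^2) * Real.sqrt ((1 - l^2) / (c^2 - l^2 * d^2)))
      MeasureTheory.volume 0 1 := by
  apply ContinuousOn.intervalIntegrable
  rw [Set.uIcc_of_le (by norm_num : (0:ℝ) ≤ 1)]
  have hden : ∀ l ∈ Set.Icc (0:ℝ) 1, c^2 - l^2 * d^2 ≠ 0 := by
    intro l hl
    have h1 : l^2 ≤ 1 := by nlinarith [hl.1, hl.2]
    have : d^2 < c^2 := by nlinarith
    nlinarith [sq_nonneg l, sq_nonneg d]
  apply ContinuousOn.mul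
  · fun_prop
  · exact ContinuousOn.sqrt (ContinuousOn.div (by fun_prop) (by fun_prop) hden)

lemma sqrt_quot_pos (c d l : ℝ) (hdc : d < c) (hd : 0 ≤ d) (hl : l ∈ Set.Ioo (0:ℝ) 1) :
    0 < Real.sqrt ((1 - l^2) / (c^2 - l^2 * d^2)) := by
  apply Real.sqrt_pos.mpr
  apply div_pos
  · nlinarith [hl.1, hl.2]
  · have h1 : l^2 ≤ 1 := by nlinarith [hl.1.le, hl.2.le]
    have h2 : l^2 * d^2 ≤ d^2 := mul_le_of_le_one_left (sq_nonneg d) h1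
    nlinarith

lemma hquot (μ c t₁ t₂ : ℝ) (hμ : μ^2 < c^2) (h0 : 0 ≤ t₁) (h12 : t₁ < t₂) (h2 : t₂ < c^2) :
    (μ^2 - t₂) / Real.sqrt (c^2 - t₂) < (μ^2 - t₁) / Real.sqrt (c^2 - t₁) := by
  set s₁ := Real.sqrt (c^2 - t₁) with hs₁def
  set s₂ := Real.sqrt (c^2 - t₂) with hs₂def
  have hs₁ : 0 < s₁ := Real.sqrt_pos.2 (by linarith)
  have hs₂ : 0 < s₂ := Real.sqrt_pos.2 (by linarith)
  have hsq₁ : s₁^2 = c^2 - t₁ := Real.sq_sqrt (by linarith)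
  have hsq₂ : s₂^2 = c^2 - t₂ := Real.sq_sqrt (by linarith)
  have hs : s₂ < s₁ := by
    rw [hs₁def, hs₂def]
    exact Real.sqrt_lt_sqrt (by linarith) (by linarith)
  rw [div_lt_div_iff₀ hs₂ hs₁]
  nlinarith [mul_pos (sub_pos.mpr hs)
    (show 0 < c^2 - μ^2 + s₁ * s₂ by nlinarith [mul_pos hs₁ hs₂])]

lemma part1 (c : ℝ) (hc : 0 < c) (d : ℝ) (hd : 0 < d) (hdc : d < c) :
    StrictMonoOn (fun μ => Ffun c μ d) (Set.Ioo 0 d) := by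
  intro μ₁ h₁ μ₂ h₂ hlt
  have hi₁ := Ffun_integrable c μ₁ d hd.le hdc
  have hi₂ := Ffun_integrable c μ₂ d hd.le hdc
  have key : 0 < ∫ l in (0:ℝ)..1,
      ((μ₂^2 - l^2 * d^2) * Real.sqrt ((1 - l^2) / (c^2 - l^2 * d^2)) -
       (μ₁^2 - l^2 * d^2) * Real.sqrt ((1 - l^2) / (c^2 - l^2 * d^2))) := by
    apply intervalIntegral.intervalIntegral_pos_of_pos_on (hi₂.sub hi₁) _ one_pos
    intro l hl
    have hg := sqrt_quot_pos c d l hdc hd.le hl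
    have hμ : μ₁^2 < μ₂^2 := by nlinarith [h₁.1, h₂.1]
    nlinarith
  rw [intervalIntegral.integral_sub hi₂ hi₁] at key
  simpa [Ffun] using sub_pos.mp (by linarith)

lemma part2 (c : ℝ) (hc : 0 < c) (μ : ℝ) (hμ : 0 < μ) (hμc : μ < c) :
    StrictAntiOn (fun d => Ffun c μ d) (Set.Ioo μ c) := by
  intro d₁ h₁ d₂ h₂ hlt
  have hd₁ : 0 < d₁ := lt_trans hμ h₁.1
  have hd₂ : 0 < d₂ := lt_trans hμ h₂.1
  have hi₁ := Ffun_integrable c μ d₁ hd₁.le h₁.2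
  have hi₂ := Ffun_integrable c μ d₂ hd₂.le h₂.2
  have key : 0 < ∫ l in (0:ℝ)..1,
      ((μ^2 - l^2 * d₁^2) * Real.sqrt ((1 - l^2) / (c^2 - l^2 * d₁^2)) -
       (μ^2 - l^2 * d₂^2) * Real.sqrt ((1 - l^2) / (c^2 - l^2 * d₂^2))) := by
    apply intervalIntegral.intervalIntegral_pos_of_pos_on (hi₁.sub hi₂) _ one_pos
    intro l hl
    have hr : 0 < Real.sqrt (1 - l^2) := Real.sqrt_pos.2 (by nlinarith [hl.1, hl.2])
    have hnum : (0:ℝ) ≤ 1 - l^2 := by nlinarith [hl.1, hl.2]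
    have ht1 : 0 ≤ l^2 * d₁^2 := by positivity
    have ht12 : l^2 * d₁^2 < l^2 * d₂^2 := by
      have h2 : d₁^2 < d₂^2 := by nlinarith
      have hl2 : 0 < l^2 := pow_pos hl.1 2
      nlinarith
    have ht2 : l^2 * d₂^2 < c^2 := by
      have h1 : l^2 ≤ 1 := by nlinarith [hl.1.le, hl.2.le]
      have h2 : l^2 * d₂^2 ≤ d₂^2 := mul_le_of_le_one_left (sq_nonneg d₂) h1
      nlinarith [h₂.2]
    have hq := hquot μ c (l^2 * d₁^2) (l^2 * d₂^2) (by nlinarith) ht1 ht12 ht2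
    rw [Real.sqrt_div hnum, Real.sqrt_div hnum]
    have e1 : (μ^2 - l^2 * d₁^2) * (Real.sqrt (1 - l^2) / Real.sqrt (c^2 - l^2 * d₁^2)) =
        Real.sqrt (1 - l^2) * ((μ^2 - l^2 * d₁^2) / Real.sqrt (c^2 - l^2 * d₁^2)) := by
      ring
    have e2 : (μ^2 - l^2 * d₂^2) * (Real.sqrt (1 - l^2) / Real.sqrt (c^2 - l^2 * d₂^2)) =
        Real.sqrt (1 - l^2) * ((μ^2 - l^2 * d₂^2) / Real.sqrt (c^2 - l^2 * d₂^2)) := by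
      ring
    rw [e1, e2]
    have := mul_lt_mul_of_pos_left hq hr
    linarith
  rw [intervalIntegral.integral_sub hi₁ hi₂] at key
  simpa [Ffun] using sub_pos.mp (by linarith)

theorem stmt1 (c : ℝ) (hc : 0 < c) :
    (∀ d : ℝ, 0 < d → d < c → StrictMonoOn (fun μ => Ffun c μ d) (Set.Ioo 0 d)) ∧
    (∀ μ : ℝ, 0 < μ → μ < c → StrictAntiOn (fun d => Ffun c μ d) (Set.Ioo μ c)) ∧
    (∀ μf : ℝ → ℝ,
      (∀ d ∈ Set.Ioo (0:ℝ) c, μf d ∈ Set.Ioo 0 d ∧ Ffun c (μf d) d = 0) →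
      StrictMonoOn μf (Set.Ioo 0 c)) := by
  refine ⟨fun d hd hdc => part1 c hc d hd hdc, fun μ hμ hμc => part2 c hc μ hμ hμc, ?_⟩
  intro μf H d₁ hd₁ d₂ hd₂ hlt
  obtain ⟨hm₁, hF₁⟩ := H d₁ hd₁
  obtain ⟨hm₂, hF₂⟩ := H d₂ hd₂
  by_contra h
  push_neg at h
  have hμ₁c : μf d₁ < c := lt_trans hm₁.2 hd₁.2
  have hA : Ffun c (μf d₁) d₂ < Ffun c (μf d₁) d₁ :=
    part2 c hc (μf d₁) hm₁.1 hμ₁c ⟨hm₁.2, hd₁.2⟩ ⟨lt_trans hm₁.2 hlt, hd₂.2⟩ hlt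
  have hB : Ffun c (μf d₂) d₂ ≤ Ffun c (μf d₁) d₂ :=
    (part1 c hc d₂ hd₂.1 hd₂.2).monotoneOn ⟨hm₂.1, hm₂.2⟩
      ⟨hm₁.1, lt_trans hm₁.2 hlt⟩ h
  rw [hF₂] at hB
  rw [hF₁] at hA
  linarith
end

section
/- Let c>0. For d∈(0,c) set I₀(d)=∫_d^c dy/√((c²−y²)(y²−d²)), I₁(d)=∫₀^d dy/√((c²−y²)(d²−y²)), and τ*(d)=−4π·I₁(d)/I₀(d). Then: (1) τ*(d)<0 for all d∈(0,c); (2) τ* is strictly decreasing on (0,c); (3) τ*(d)→0 as d→0⁺ and τ*(d)→−∞ as d→c⁻. Hence τ* has an inverse function h:(−∞,0)→(0,c). -/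
/-!
The substitutions `y = d sin θ` and `y² = c² - (c² - d²) cos² θ` turn `I₁(d)` and `I₀(d)` into
`K(d²)` and `K(c² - d²)`, where `K(m) = ∫₀^{π/2} dθ / √(c² - m sin² θ)`. On `m < c²` the function
`K` is positive, continuous and strictly increasing, and it blows up as `m → c²`: after
`θ ↦ π/2 - θ` the integrand dominates `1 / (c θ + √(c² - m))`, whose integral is logarithmic in
`1 / √(c² - m)`. Hence `τ* = -4π K(d²) / K(c² - d²)` is negative and strictly decreasing, tends to
`0` at `0⁺` (the denominator blows up) and to `-∞` at `c⁻` (the numerator does), and the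
intermediate value theorem makes it a bijection from `(0, c)` onto `(-∞, 0)`.
-/

/-- `I₀(d) = ∫_d^c dy/√((c²−y²)(y²−d²))`. -/
noncomputable def I0 (c d : ℝ) : ℝ :=
  ∫ y in d..c, 1 / Real.sqrt ((c^2 - y^2) * (y^2 - d^2))

/-- `I₁(d) = ∫₀^d dy/√((c²−y²)(d²−y²))`. -/
noncomputable def I1 (c d : ℝ) : ℝ :=
  ∫ y in (0:ℝ)..d, 1 / Real.sqrt ((c^2 - y^2) * (d^2 - y^2))

/-- `τ*(d) = −4π·I₁(d)/I₀(d)`. -/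
noncomputable def tauStar (c d : ℝ) : ℝ := -4 * Real.pi * I1 c d / I0 c d

open Real Set Filter Topology MeasureTheory intervalIntegral

lemma integral_one_div_mul_add {a δ b : ℝ} (ha : 0 < a) (hδ : 0 < δ) (hb : 0 ≤ b) :
    ∫ θ in (0:ℝ)..b, 1 / (a * θ + δ) = a⁻¹ * log (1 + a * b / δ) := by
  rw [integral_comp_mul_add (f := fun x => 1 / x) ha.ne', integral_one_div_of_pos (by simpa)
    (by positivity), smul_eq_mul, mul_zero, zero_add, add_div, div_self hδ.ne', add_comm]

lemma sin_pos_of_mem_Ioo_pi_div_two {θ : ℝ} (hθ : θ ∈ Ioo 0 (π / 2)) : 0 < sin θ :=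
  sin_pos_of_pos_of_lt_pi hθ.1 (by linarith [hθ.2, pi_pos])

lemma cos_pos_of_mem_Ioo_pi_div_two {θ : ℝ} (hθ : θ ∈ Ioo 0 (π / 2)) : 0 < cos θ :=
  cos_pos_of_mem_Ioo ⟨by linarith [hθ.1, pi_pos], hθ.2⟩

/-- Substitution `u = f x` for monotone `f`, with no regularity on `g`: this is what handles the
endpoint singularities of `I₀` and `I₁`. -/
lemma integral_eq_integral_of_deriv_nonneg {f f' g k : ℝ → ℝ} {a b : ℝ} (hab : a ≤ b)
    (hf : ContinuousOn f (Icc a b)) (hff' : ∀ x ∈ Ioo a b, HasDerivAt f (f' x) x)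
    (hf' : ∀ x ∈ Ioo a b, 0 ≤ f' x) (hk : EqOn (fun x => f' x * g (f x)) k (Ioo a b)) :
    ∫ u in f a..f b, g u = ∫ x in a..b, k x := by
  rw [← integral_deriv_smul_comp_of_deriv_nonneg (by rwa [uIcc_of_le hab])
    (by simpa [hab] using hff') (by simpa [hab] using hf')]
  exact integral_congr_Ioo_of_le hab hk

/-- `ellipticK c m = c⁻¹ K(m / c²)`, where `K` is the complete elliptic integral of the first
kind in the parameter convention `K(m) = ∫₀^{π/2} dθ / √(1 - m sin²θ)`. -/
noncomputable def ellipticK (c m : ℝ) : ℝ :=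
  ∫ θ in (0:ℝ)..π / 2, 1 / √(c ^ 2 - m * sin θ ^ 2)

section ellipticK

variable {c m : ℝ}

lemma sub_mul_sq_pos (hc : 0 < c) (hm : m < c ^ 2) {t : ℝ} (ht : t ^ 2 ≤ 1) :
    0 < c ^ 2 - m * t ^ 2 := by
  rcases le_or_gt m 0 with hm₀ | hm₀
  · nlinarith [mul_nonpos_of_nonpos_of_nonneg hm₀ (sq_nonneg t)]
  · nlinarith [mul_le_of_le_one_right hm₀.le ht]

lemma continuous_one_div_sqrt_sub_mul_sq (hc : 0 < c) (hm : m < c ^ 2) {u : ℝ → ℝ}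
    (hu : Continuous u) (hu₁ : ∀ θ, u θ ^ 2 ≤ 1) :
    Continuous fun θ => 1 / √(c ^ 2 - m * u θ ^ 2) :=
  continuous_const.div (by fun_prop) fun θ => (sqrt_pos.2 (sub_mul_sq_pos hc hm (hu₁ θ))).ne'

lemma ellipticK_pos (hc : 0 < c) (hm : m < c ^ 2) : 0 < ellipticK c m :=
  intervalIntegral_pos_of_pos
    ((continuous_one_div_sqrt_sub_mul_sq hc hm continuous_sin sin_sq_le_one).intervalIntegrable
      (μ := volume) _ _)
    (fun θ => one_div_pos.2 (sqrt_pos.2 (sub_mul_sq_pos hc hm (sin_sq_le_one θ))))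
    (by positivity)

lemma strictMonoOn_ellipticK (hc : 0 < c) : StrictMonoOn (ellipticK c) (Iio (c ^ 2)) := by
  intro m₁ hm₁ m₂ hm₂ h12
  have hi₁ := (continuous_one_div_sqrt_sub_mul_sq hc hm₁ continuous_sin
    sin_sq_le_one).intervalIntegrable (μ := volume) 0 (π / 2)
  have hi₂ := (continuous_one_div_sqrt_sub_mul_sq hc hm₂ continuous_sin
    sin_sq_le_one).intervalIntegrable (μ := volume) 0 (π / 2)
  rw [← sub_pos, ellipticK, ellipticK, ← integral_sub hi₂ hi₁]
  refine intervalIntegral_pos_of_pos_on (hi₂.sub hi₁) (fun θ hθ => ?_) (by positivity)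
  have hpos₂ := sub_mul_sq_pos hc hm₂ (sin_sq_le_one θ)
  have hlt : c ^ 2 - m₂ * sin θ ^ 2 < c ^ 2 - m₁ * sin θ ^ 2 := by
    nlinarith [mul_lt_mul_of_pos_right h12 (pow_pos (sin_pos_of_mem_Ioo_pi_div_two hθ) 2)]
  have := one_div_lt_one_div_of_lt (sqrt_pos.2 hpos₂) (sqrt_lt_sqrt hpos₂.le hlt)
  linarith

lemma continuousOn_ellipticK (hc : 0 < c) : ContinuousOn (ellipticK c) (Iio (c ^ 2)) := by
  rw [continuousOn_iff_continuous_domRestrict]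
  refine continuous_parametric_intervalIntegral_of_continuous'
    (f := fun (m : Iio (c ^ 2)) θ => 1 / √(c ^ 2 - m * sin θ ^ 2)) ?_ 0 (π / 2)
  exact continuous_const.div (by fun_prop)
    fun p => (sqrt_pos.2 (sub_mul_sq_pos hc p.1.2 (sin_sq_le_one p.2))).ne'

lemma tendsto_ellipticK_zero (hc : 0 < c) {l : Filter ℝ} {f : ℝ → ℝ} (hf : Tendsto f l (𝓝 0)) :
    Tendsto (fun x => ellipticK c (f x)) l (𝓝 (ellipticK c 0)) :=
  ((continuousOn_ellipticK hc).continuousAt (Iio_mem_nhds (pow_pos hc 2))).tendsto.comp hf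

lemma ellipticK_eq_integral_cos (c m : ℝ) :
    ellipticK c m = ∫ θ in (0:ℝ)..π / 2, 1 / √(c ^ 2 - m * cos θ ^ 2) := by
  simp_rw [ellipticK, ← cos_pi_div_two_sub]
  rw [integral_comp_sub_left (fun θ => 1 / √(c ^ 2 - m * cos θ ^ 2))]
  simp

lemma log_le_ellipticK (hc : 0 < c) (hm : m < c ^ 2) :
    c⁻¹ * log (1 + c * (π / 2) / √(c ^ 2 - m)) ≤ ellipticK c m := by
  set δ := √(c ^ 2 - m)
  have hδ : 0 < δ := sqrt_pos.2 (sub_pos.2 hm)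
  rw [← integral_one_div_mul_add hc hδ (by positivity), ellipticK_eq_integral_cos]
  refine integral_mono_on (by positivity) ?_
    ((continuous_one_div_sqrt_sub_mul_sq hc hm continuous_cos cos_sq_le_one).intervalIntegrable
      _ _) fun θ hθ => ?_
  · exact (continuousOn_const.div (by fun_prop) fun θ hθ => by
      rw [uIcc_of_le (by positivity)] at hθ; nlinarith [hθ.1]).intervalIntegrable
  have hsin : sin θ ≤ θ := sin_le hθ.1
  have hsin₀ : 0 ≤ sin θ := sin_nonneg_of_nonneg_of_le_pi hθ.1 (by linarith [hθ.2, pi_pos])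
  have hδsq : δ ^ 2 = c ^ 2 - m := sq_sqrt (sub_pos.2 hm).le
  -- `c² - m cos²θ = c² sin²θ + δ² cos²θ ≤ c²θ² + δ²`
  have hbound : c ^ 2 - m * cos θ ^ 2 ≤ (c * θ + δ) ^ 2 := by
    nlinarith [sin_sq_add_cos_sq θ, cos_sq_le_one θ, mul_le_mul_of_nonneg_left hsin hc.le,
      mul_nonneg hc.le hsin₀, sq_nonneg (cos θ), mul_nonneg hc.le hθ.1]
  calc 1 / (c * θ + δ) = 1 / √((c * θ + δ) ^ 2) := by
        rw [sqrt_sq (by nlinarith [hθ.1])]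
    _ ≤ 1 / √(c ^ 2 - m * cos θ ^ 2) :=
        one_div_le_one_div_of_le (sqrt_pos.2 (sub_mul_sq_pos hc hm (cos_sq_le_one θ)))
          (sqrt_le_sqrt hbound)

lemma tendsto_ellipticK_atTop (hc : 0 < c) : Tendsto (ellipticK c) (𝓝[<] (c ^ 2)) atTop := by
  have hδ : Tendsto (fun m => √(c ^ 2 - m)) (𝓝[<] (c ^ 2)) (𝓝[>] 0) := by
    refine tendsto_nhdsWithin_iff.2 ⟨?_, eventually_nhdsWithin_of_forall
      fun m hm => sqrt_pos.2 (sub_pos.2 hm)⟩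
    have : Tendsto (fun m => √(c ^ 2 - m)) (𝓝 (c ^ 2)) (𝓝 (√(c ^ 2 - c ^ 2))) :=
      (continuous_const.sub continuous_id).sqrt.tendsto _
    simpa using this.mono_left nhdsWithin_le_nhds
  have hlog : Tendsto (fun m => c⁻¹ * log (1 + c * (π / 2) / √(c ^ 2 - m))) (𝓝[<] (c ^ 2))
      atTop := by
    simp_rw [div_eq_mul_inv _ (√_)]
    exact ((tendsto_log_atTop.comp (tendsto_atTop_add_const_left _ 1
      ((tendsto_inv_nhdsGT_zero.comp hδ).const_mul_atTop (by positivity)))).const_mul_atTop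
      (inv_pos.2 hc))
  exact tendsto_atTop_mono' _ (eventually_nhdsWithin_of_forall fun m hm => log_le_ellipticK hc hm)
    hlog

end ellipticK

section substitution

variable {c d : ℝ}

lemma I1_eq_ellipticK (hd : 0 < d) (hdc : d < c) : I1 c d = ellipticK c (d ^ 2) := by
  have h := integral_eq_integral_of_deriv_nonneg (a := 0) (b := π / 2) (f := fun θ => d * sin θ)
    (g := fun y => 1 / √((c ^ 2 - y ^ 2) * (d ^ 2 - y ^ 2)))
    (k := fun θ => 1 / √(c ^ 2 - d ^ 2 * sin θ ^ 2)) (by positivity) (by fun_prop)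
    (fun θ _ => (hasDerivAt_sin θ).const_mul d)
    (fun θ hθ => mul_nonneg hd.le (cos_pos_of_mem_Ioo_pi_div_two hθ).le) fun θ hθ => ?_
  · rw [I1, ellipticK]
    simpa only [sin_zero, sin_pi_div_two, mul_zero, mul_one] using h
  have hcos := cos_pos_of_mem_Ioo_pi_div_two hθ
  have hA : 0 < c ^ 2 - d ^ 2 * sin θ ^ 2 := by
    nlinarith [mul_le_of_le_one_right (sq_nonneg d) (sin_sq_le_one θ)]
  have hprod : (c ^ 2 - (d * sin θ) ^ 2) * (d ^ 2 - (d * sin θ) ^ 2)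
      = (c ^ 2 - d ^ 2 * sin θ ^ 2) * (d * cos θ) ^ 2 := by
    linear_combination (-(d ^ 2 * c ^ 2) + d ^ 4 * sin θ ^ 2) * sin_sq_add_cos_sq θ
  beta_reduce
  rw [hprod, sqrt_mul hA.le, sqrt_sq (by positivity)]
  have := sqrt_pos.2 hA
  field_simp

lemma I0_eq_ellipticK (hd : 0 < d) (hdc : d < c) : I0 c d = ellipticK c (c ^ 2 - d ^ 2) := by
  set m := c ^ 2 - d ^ 2
  have hm : 0 < m := by nlinarith
  have hF : ∀ θ, 0 < c ^ 2 - m * cos θ ^ 2 := fun θ => by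
    nlinarith [mul_le_of_le_one_right hm.le (cos_sq_le_one θ)]
  have h := integral_eq_integral_of_deriv_nonneg (a := 0) (b := π / 2)
    (f := fun θ => √(c ^ 2 - m * cos θ ^ 2))
    (f' := fun θ => m * sin θ * cos θ / √(c ^ 2 - m * cos θ ^ 2))
    (g := fun y => 1 / √((c ^ 2 - y ^ 2) * (y ^ 2 - d ^ 2)))
    (k := fun θ => 1 / √(c ^ 2 - m * cos θ ^ 2)) (by positivity) (by fun_prop)
    (fun θ _ => ?_) (fun θ hθ => ?_) fun θ hθ => ?_
  · have e0 : √(c ^ 2 - m * cos 0 ^ 2) = d := by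
      rw [cos_zero]; simp [m, sqrt_sq hd.le]
    have e1 : √(c ^ 2 - m * cos (π / 2) ^ 2) = c := by
      rw [cos_pi_div_two]; simp [sqrt_sq (hd.trans hdc).le]
    rw [ellipticK_eq_integral_cos, I0, ← h, e0, e1]
  · convert (((hasDerivAt_cos θ).fun_pow 2).const_mul m).const_sub (c ^ 2) |>.sqrt (hF θ).ne'
      using 1
    field_simp
    ring
  · have := sin_pos_of_mem_Ioo_pi_div_two hθ
    have := cos_pos_of_mem_Ioo_pi_div_two hθ
    positivity
  have hsin := sin_pos_of_mem_Ioo_pi_div_two hθ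
  have hcos := cos_pos_of_mem_Ioo_pi_div_two hθ
  have hprod : (c ^ 2 - √(c ^ 2 - m * cos θ ^ 2) ^ 2) * (√(c ^ 2 - m * cos θ ^ 2) ^ 2 - d ^ 2)
      = (m * sin θ * cos θ) ^ 2 := by
    rw [sq_sqrt (hF θ).le]
    linear_combination (-(m ^ 2 * cos θ ^ 2)) * sin_sq_add_cos_sq θ
  beta_reduce
  rw [hprod, sqrt_sq (by positivity)]
  have := sqrt_pos.2 (hF θ)
  field_simp

end substitution

section tauStar

variable {c d : ℝ}

lemma tauStar_eq (hd : 0 < d) (hdc : d < c) :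
    tauStar c d = -4 * π * ellipticK c (d ^ 2) / ellipticK c (c ^ 2 - d ^ 2) := by
  rw [tauStar, I1_eq_ellipticK hd hdc, I0_eq_ellipticK hd hdc]

lemma sq_lt_sq_of_mem_Ioo (hd : d ∈ Ioo 0 c) : d ^ 2 < c ^ 2 :=
  pow_lt_pow_left₀ hd.2 hd.1.le two_ne_zero

lemma sq_sub_sq_lt_sq_of_mem_Ioo (hd : d ∈ Ioo 0 c) : c ^ 2 - d ^ 2 < c ^ 2 :=
  sub_lt_self _ (pow_pos hd.1 2)

lemma tauStar_neg (hd : d ∈ Ioo 0 c) : tauStar c d < 0 := by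
  have hc : 0 < c := hd.1.trans hd.2
  rw [tauStar_eq hd.1 hd.2]
  exact div_neg_of_neg_of_pos
    (mul_neg_of_neg_of_pos (by linarith [pi_pos]) (ellipticK_pos hc (sq_lt_sq_of_mem_Ioo hd)))
    (ellipticK_pos hc (sq_sub_sq_lt_sq_of_mem_Ioo hd))

lemma strictAntiOn_tauStar : StrictAntiOn (tauStar c) (Ioo 0 c) := by
  intro d₁ h₁ d₂ h₂ h12
  have hc : 0 < c := h₁.1.trans h₁.2
  have hnum : ellipticK c (d₁ ^ 2) < ellipticK c (d₂ ^ 2) :=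
    strictMonoOn_ellipticK hc (sq_lt_sq_of_mem_Ioo h₁) (sq_lt_sq_of_mem_Ioo h₂)
      (pow_lt_pow_left₀ h12 h₁.1.le two_ne_zero)
  have hden : ellipticK c (c ^ 2 - d₂ ^ 2) < ellipticK c (c ^ 2 - d₁ ^ 2) :=
    strictMonoOn_ellipticK hc (sq_sub_sq_lt_sq_of_mem_Ioo h₂) (sq_sub_sq_lt_sq_of_mem_Ioo h₁)
      (by nlinarith [h₁.1])
  have hnum₁ := ellipticK_pos hc (sq_lt_sq_of_mem_Ioo h₁)
  have hden₂ := ellipticK_pos hc (sq_sub_sq_lt_sq_of_mem_Ioo h₂)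
  have hratio : ellipticK c (d₁ ^ 2) / ellipticK c (c ^ 2 - d₁ ^ 2)
      < ellipticK c (d₂ ^ 2) / ellipticK c (c ^ 2 - d₂ ^ 2) := by
    rw [div_lt_div_iff₀ (hden₂.trans hden) hden₂]
    nlinarith
  rw [tauStar_eq h₁.1 h₁.2, tauStar_eq h₂.1 h₂.2, mul_div_assoc, mul_div_assoc]
  exact mul_lt_mul_of_neg_left hratio (by linarith [pi_pos])

lemma continuousOn_tauStar (hc : 0 < c) : ContinuousOn (tauStar c) (Ioo 0 c) := by
  have hK := continuousOn_ellipticK hc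
  refine ContinuousOn.congr ?_ fun d hd => tauStar_eq (c := c) hd.1 hd.2
  exact (continuousOn_const.mul (hK.comp (by fun_prop) fun d => sq_lt_sq_of_mem_Ioo)).div
    (hK.comp (by fun_prop) fun d => sq_sub_sq_lt_sq_of_mem_Ioo)
    fun d hd => (ellipticK_pos hc (sq_sub_sq_lt_sq_of_mem_Ioo hd)).ne'

lemma tendsto_tauStar_nhdsGT_zero (hc : 0 < c) : Tendsto (tauStar c) (𝓝[>] 0) (𝓝 0) := by
  have hnum : Tendsto (fun d => -4 * π * ellipticK c (d ^ 2)) (𝓝[>] 0)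
      (𝓝 (-4 * π * ellipticK c 0)) :=
    (tendsto_ellipticK_zero hc (((continuous_pow 2).tendsto' 0 0 (zero_pow two_ne_zero)).mono_left
      nhdsWithin_le_nhds)).const_mul _
  have hsub : Tendsto (fun d => c ^ 2 - d ^ 2) (𝓝[>] 0) (𝓝[<] (c ^ 2)) := by
    refine tendsto_nhdsWithin_iff.2 ⟨?_, eventually_nhdsWithin_of_forall
      fun d (hd : 0 < d) => sub_lt_self _ (pow_pos hd 2)⟩
    exact ((by fun_prop : Continuous fun d : ℝ => c ^ 2 - d ^ 2).tendsto' 0 _ (by simp)).mono_left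
      nhdsWithin_le_nhds
  refine (hnum.div_atTop ((tendsto_ellipticK_atTop hc).comp hsub)).congr' ?_
  filter_upwards [Ioo_mem_nhdsGT hc] with d hd
  exact (tauStar_eq hd.1 hd.2).symm

lemma tendsto_tauStar_atBot (hc : 0 < c) : Tendsto (tauStar c) (𝓝[<] c) atBot := by
  have hsq : Tendsto (fun d => d ^ 2) (𝓝[<] c) (𝓝[<] (c ^ 2)) := by
    refine tendsto_nhdsWithin_iff.2 ⟨((continuous_pow 2).tendsto c).mono_left
      nhdsWithin_le_nhds, ?_⟩
    filter_upwards [Ioo_mem_nhdsLT hc] with d hd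
    exact sq_lt_sq_of_mem_Ioo hd
  have hden : Tendsto (fun d => (ellipticK c (c ^ 2 - d ^ 2))⁻¹) (𝓝[<] c)
      (𝓝 (ellipticK c 0)⁻¹) := by
    refine (tendsto_ellipticK_zero hc ?_).inv₀ (ellipticK_pos hc (pow_pos hc 2)).ne'
    exact ((by fun_prop : Continuous fun d : ℝ => c ^ 2 - d ^ 2).tendsto' c _ (by simp)).mono_left
      nhdsWithin_le_nhds
  have hratio := ((tendsto_ellipticK_atTop hc).comp hsq).atTop_mul_pos
    (inv_pos.2 (ellipticK_pos hc (pow_pos hc 2))) hden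
  refine (hratio.const_mul_atTop_of_neg (by linarith [pi_pos] : -4 * π < 0)).congr' ?_
  filter_upwards [Ioo_mem_nhdsLT hc] with d hd
  rw [tauStar_eq hd.1 hd.2, mul_div_assoc, div_eq_mul_inv]
  rfl

lemma surjOn_tauStar (hc : 0 < c) : SurjOn (tauStar c) (Ioo 0 c) (Iio 0) := by
  intro s (hs : s < 0)
  obtain ⟨d₁, hd₁s, hd₁⟩ := (((tendsto_tauStar_nhdsGT_zero hc).eventually
    (eventually_gt_nhds hs)).and (Ioo_mem_nhdsGT hc)).exists
  obtain ⟨d₂, hd₂s, hd₂⟩ := (((tendsto_tauStar_atBot hc).eventually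
    (eventually_lt_atBot s)).and (Ioo_mem_nhdsLT hc)).exists
  exact (continuousOn_tauStar hc).surjOn_uIcc hd₁ hd₂ (mem_uIcc.2 (.inr ⟨hd₂s.le, hd₁s.le⟩))

end tauStar

theorem stmt2 (c : ℝ) (hc : 0 < c) :
    (∀ d ∈ Set.Ioo (0:ℝ) c, tauStar c d < 0) ∧
    StrictAntiOn (tauStar c) (Set.Ioo 0 c) ∧
    Filter.Tendsto (tauStar c) (nhdsWithin 0 (Set.Ioi 0)) (nhds 0) ∧
    Filter.Tendsto (tauStar c) (nhdsWithin c (Set.Iio c)) Filter.atBot ∧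
    ∃ h : ℝ → ℝ,
      (∀ s : ℝ, s < 0 → h s ∈ Set.Ioo 0 c ∧ tauStar c (h s) = s) ∧
      (∀ d ∈ Set.Ioo (0:ℝ) c, h (tauStar c d) = d) := by
  refine ⟨fun d => tauStar_neg, strictAntiOn_tauStar, tendsto_tauStar_nhdsGT_zero hc,
    tendsto_tauStar_atBot hc, Function.invFunOn (tauStar c) (Ioo 0 c), fun s hs => ?_,
    fun d hd => strictAntiOn_tauStar.injOn.leftInvOn_invFunOn hd⟩
  exact ⟨Function.invFunOn_mem (surjOn_tauStar hc hs), Function.invFunOn_eq (surjOn_tauStar hc hs)⟩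
end

section
/- Let c>0. As η→0⁺ one has I₀(c(1−η)) = π/(2c) + O(η) and I₁(c(1−η)) = (1/(2c))·log(8/η) + O(η·log(1/η)); that is, there exist constants C>0 and η₀>0 such that for all 0<η<η₀, |I₀(c(1−η)) − π/(2c)| ≤ C·η and |I₁(c(1−η)) − (1/(2c))·log(8/η)| ≤ C·η·log(1/η). -/
open Real MeasureTheory intervalIntegral Set

lemma IntervalIntegrable.of_abs_le {f g : ℝ → ℝ} {a b : ℝ} (hab : a ≤ b)
    (hg : IntervalIntegrable g volume a b) (hf : Measurable f)
    (hle : ∀ y ∈ Ioc a b, |f y| ≤ g y) : IntervalIntegrable f volume a b :=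
  hg.mono_fun' hf.aestronglyMeasurable <| by
    rw [uIoc_of_le hab]
    exact (ae_restrict_mem measurableSet_Ioc).mono hle

lemma intervalIntegrable_deriv_of_nonneg_of_le {F f : ℝ → ℝ} {a b : ℝ} (hab : a ≤ b)
    (hcont : ContinuousOn F (Icc a b)) (hderiv : ∀ x ∈ Ioo a b, HasDerivAt F (f x) x)
    (hpos : ∀ x ∈ Ioo a b, 0 ≤ f x) : IntervalIntegrable f volume a b :=
  (intervalIntegrable_iff_integrableOn_Ioc_of_le hab).2
    (integrableOn_deriv_of_nonneg hcont hderiv hpos)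

lemma abs_sub_le_abs_sq_sub_sq_div {a b : ℝ} (ha : 0 ≤ a) (hb : 0 < b) :
    |a - b| ≤ |a ^ 2 - b ^ 2| / b := by
  rw [le_div_iff₀ hb, show a ^ 2 - b ^ 2 = (a - b) * (a + b) by ring, abs_mul,
    abs_of_pos (by linarith : 0 < a + b)]
  exact mul_le_mul_of_nonneg_left (by linarith) (abs_nonneg _)

lemma one_le_log_one_div {η : ℝ} (hη : 0 < η) (hη' : η ≤ 1 / 4) : 1 ≤ log (1 / η) := by
  have h4 : log 4 ≤ log (1 / η) := log_le_log (by norm_num) (by rw [le_div_iff₀ hη]; linarith)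
  rw [show (4 : ℝ) = 2 ^ 2 by norm_num, log_pow, Nat.cast_ofNat] at h4
  linarith [log_two_gt_d9]

lemma log_two_sub_log_two_sub_le {η : ℝ} (hη : 0 ≤ η) (hη' : η ≤ 1) :
    log 2 - log (2 - η) ≤ η := by
  have h := log_le_sub_one_of_pos (div_pos two_pos (by linarith : 0 < 2 - η))
  rw [log_div two_ne_zero (by linarith), div_sub_one (by linarith)] at h
  refine h.trans ?_
  rw [div_le_iff₀ (by linarith)]
  nlinarith

section ArcsineDensity

variable {c d : ℝ}

lemma hasDerivAt_arcsin_affine {y : ℝ} (hy : y ∈ Ioo d c) :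
    HasDerivAt (fun y => arcsin ((2 * y - c - d) / (c - d))) (√((c - y) * (y - d)))⁻¹ y := by
  obtain ⟨hdy, hyc⟩ := hy
  have hcd : 0 < c - d := by linarith
  have hne1 : (2 * y - c - d) / (c - d) ≠ -1 := by
    rw [Ne, div_eq_iff hcd.ne']; intro h; linarith
  have hne2 : (2 * y - c - d) / (c - d) ≠ 1 := by
    rw [Ne, div_eq_iff hcd.ne']; intro h; linarith
  have hsqrt : √(1 - ((2 * y - c - d) / (c - d)) ^ 2) = 2 * √((c - y) * (y - d)) / (c - d) := by
    rw [show 1 - ((2 * y - c - d) / (c - d)) ^ 2 = 2 ^ 2 * ((c - y) * (y - d)) / (c - d) ^ 2 by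
      field_simp; ring, sqrt_div' _ (sq_nonneg _), sqrt_mul (by norm_num), sqrt_sq (by norm_num),
      sqrt_sq hcd.le]
  have hlin : HasDerivAt (fun y => (2 * y - c - d) / (c - d)) (2 / (c - d)) y := by
    simpa using (((hasDerivAt_id y).const_mul 2).sub_const c |>.sub_const d).div_const (c - d)
  refine ((hasDerivAt_arcsin hne1 hne2).comp y hlin).congr_deriv ?_
  rw [hsqrt]
  have : 0 < √((c - y) * (y - d)) := sqrt_pos.2 (mul_pos (by linarith) (by linarith))
  field_simp

lemma continuous_arcsin_affine : Continuous (fun y => arcsin ((2 * y - c - d) / (c - d))) := by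
  fun_prop

lemma intervalIntegrable_arcsine_kernel (h : d < c) :
    IntervalIntegrable (fun y => (√((c - y) * (y - d)))⁻¹) volume d c :=
  intervalIntegrable_deriv_of_nonneg_of_le h.le continuous_arcsin_affine.continuousOn
    (fun _ hy => hasDerivAt_arcsin_affine hy) (fun _ _ => inv_nonneg.2 (sqrt_nonneg _))

lemma integral_arcsine_kernel (h : d < c) :
    ∫ y in d..c, (√((c - y) * (y - d)))⁻¹ = π := by
  have hcd : c - d ≠ 0 := by linarith
  rw [integral_eq_sub_of_hasDerivAt_of_le h.le continuous_arcsin_affine.continuousOn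
    (fun _ hy => hasDerivAt_arcsin_affine hy) (intervalIntegrable_arcsine_kernel h)]
  rw [show (2 * c - c - d) / (c - d) = 1 by field_simp; ring,
    show (2 * d - c - d) / (c - d) = -1 by field_simp; ring, arcsin_one, arcsin_neg_one]
  ring

lemma integral_mul_arcsine_kernel_mem_Icc (h : d < c) {w : ℝ → ℝ} (hw : Measurable w)
    {m M : ℝ} (hm : 0 ≤ m) (hwb : ∀ y ∈ Icc d c, m ≤ w y ∧ w y ≤ M) :
    ∫ y in d..c, w y * (√((c - y) * (y - d)))⁻¹ ∈ Icc (m * π) (M * π) := by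
  have hk := intervalIntegrable_arcsine_kernel h
  have hint : IntervalIntegrable (fun y => w y * (√((c - y) * (y - d)))⁻¹) volume d c := by
    refine (hk.const_mul M).of_abs_le h.le (by fun_prop) fun y hy => ?_
    obtain ⟨hmw, hwM⟩ := hwb y (Ioc_subset_Icc_self hy)
    rw [abs_mul, abs_of_nonneg (hm.trans hmw), abs_of_nonneg (inv_nonneg.2 (sqrt_nonneg _))]
    exact mul_le_mul_of_nonneg_right hwM (inv_nonneg.2 (sqrt_nonneg _))
  rw [← integral_arcsine_kernel h, ← intervalIntegral.integral_const_mul,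
    ← intervalIntegral.integral_const_mul]
  exact ⟨integral_mono_on h.le (hk.const_mul m) hint fun y hy =>
      mul_le_mul_of_nonneg_right (hwb y hy).1 (inv_nonneg.2 (sqrt_nonneg _)),
    integral_mono_on h.le hint (hk.const_mul M) fun y hy =>
      mul_le_mul_of_nonneg_right (hwb y hy).2 (inv_nonneg.2 (sqrt_nonneg _))⟩

end ArcsineDensity

lemma I0_mem_Icc {c d : ℝ} (hd : 0 < d) (hdc : d < c) :
    I0 c d ∈ Icc (π / (2 * c)) (π / √(2 * d * (c + d))) := by
  have hfactor : EqOn (fun y => 1 / √((c ^ 2 - y ^ 2) * (y ^ 2 - d ^ 2)))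
      (fun y => (√((c + y) * (y + d)))⁻¹ * (√((c - y) * (y - d)))⁻¹) (uIcc d c) := by
    intro y hy
    rw [uIcc_of_le hdc.le] at hy
    dsimp only
    rw [show (c ^ 2 - y ^ 2) * (y ^ 2 - d ^ 2) = ((c + y) * (y + d)) * ((c - y) * (y - d)) by ring,
      sqrt_mul (by nlinarith [hy.1]), one_div, mul_inv]
  have hbounds : ∀ y ∈ Icc d c, 1 / (2 * c) ≤ (√((c + y) * (y + d)))⁻¹ ∧
      (√((c + y) * (y + d)))⁻¹ ≤ 1 / √(2 * d * (c + d)) := by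
    intro y ⟨hdy, hyc⟩
    rw [one_div, one_div]
    constructor
    · refine inv_anti₀ (sqrt_pos.2 (by nlinarith)) ?_
      rw [show 2 * c = √((2 * c) ^ 2) from (sqrt_sq (by linarith)).symm]
      exact sqrt_le_sqrt (by nlinarith)
    · exact inv_anti₀ (sqrt_pos.2 (by nlinarith)) (sqrt_le_sqrt (by nlinarith))
  have hc : 0 < c := hd.trans hdc
  have h := integral_mul_arcsine_kernel_mem_Icc hdc (by fun_prop) (by positivity) hbounds
  rwa [← integral_congr hfactor, ← I0, one_div_mul_eq_div, one_div_mul_eq_div] at h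

lemma abs_I0_mul_one_sub_sub_le {c η : ℝ} (hc : 0 < c) (hη : 0 < η) (hη' : η ≤ 1 / 2) :
    |I0 c (c * (1 - η)) - π / (2 * c)| ≤ π / c * η := by
  obtain ⟨hlow, hup⟩ := I0_mem_Icc (c := c) (d := c * (1 - η)) (by nlinarith) (by nlinarith)
  have hroot : 2 * c * (1 - η) ≤ √(2 * (c * (1 - η)) * (c + c * (1 - η))) := by
    rw [show 2 * c * (1 - η) = √((2 * c * (1 - η)) ^ 2) from (sqrt_sq (by nlinarith)).symm]
    exact sqrt_le_sqrt (by nlinarith)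
  have hup' : π / √(2 * (c * (1 - η)) * (c + c * (1 - η))) ≤ π / (2 * c) + π / c * η := by
    calc _ ≤ π / (2 * c * (1 - η)) := div_le_div_of_nonneg_left pi_pos.le (by nlinarith) hroot
      _ ≤ π * (1 + 2 * η) / (2 * c) := by
        rw [div_le_div_iff₀ (by nlinarith) (by positivity)]
        nlinarith [mul_nonneg (mul_nonneg (mul_pos pi_pos hc).le hη.le)
          (by linarith : (0 : ℝ) ≤ 1 - 2 * η)]
      _ = π / (2 * c) + π / c * η := by field_simp
  rw [abs_le]
  constructor <;> nlinarith [pi_pos]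

section LogarithmicSingularity

variable {c d : ℝ}

lemma hasDerivAt_neg_log_sqrt_add_sqrt (hdc : d < c) {y : ℝ} (hy : y ∈ Ioo 0 d) :
    HasDerivAt (fun y => -log (√(c ^ 2 - y ^ 2) + √(d ^ 2 - y ^ 2)))
      (y / √((c ^ 2 - y ^ 2) * (d ^ 2 - y ^ 2))) y := by
  obtain ⟨hy0, hyd⟩ := hy
  have hc : 0 < c ^ 2 - y ^ 2 := by nlinarith
  have hd : 0 < d ^ 2 - y ^ 2 := by nlinarith
  have hderiv (k : ℝ) : HasDerivAt (fun y : ℝ => k ^ 2 - y ^ 2) (-(2 * y)) y := by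
    simpa using (hasDerivAt_pow 2 y).const_sub (k ^ 2)
  have hsum := ((hderiv c).sqrt hc.ne').add ((hderiv d).sqrt hd.ne')
  have hpos : 0 < √(c ^ 2 - y ^ 2) + √(d ^ 2 - y ^ 2) := by positivity
  refine (hsum.log hpos.ne').neg.congr_deriv ?_
  rw [Pi.add_apply, sqrt_mul hc.le]
  field_simp
  ring

lemma continuousOn_neg_log_sqrt_add_sqrt (hdc : d < c) :
    ContinuousOn (fun y => -log (√(c ^ 2 - y ^ 2) + √(d ^ 2 - y ^ 2))) (Icc 0 d) := by
  refine (ContinuousOn.log (by fun_prop) fun y hy => ?_).neg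
  have : 0 < √(c ^ 2 - y ^ 2) := sqrt_pos.2 (by nlinarith [hy.1, hy.2])
  positivity

lemma intervalIntegrable_div_sqrt (hd : 0 < d) (hdc : d < c) :
    IntervalIntegrable (fun y => y / √((c ^ 2 - y ^ 2) * (d ^ 2 - y ^ 2))) volume 0 d :=
  intervalIntegrable_deriv_of_nonneg_of_le hd.le (continuousOn_neg_log_sqrt_add_sqrt hdc)
    (fun _ hy => hasDerivAt_neg_log_sqrt_add_sqrt hdc hy) fun _ hy => by
      have := hy.1
      positivity

lemma integral_div_sqrt (hd : 0 < d) (hdc : d < c) :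
    ∫ y in (0 : ℝ)..d, y / √((c ^ 2 - y ^ 2) * (d ^ 2 - y ^ 2))
      = log ((c + d) / (c - d)) / 2 := by
  rw [integral_eq_sub_of_hasDerivAt_of_le hd.le (continuousOn_neg_log_sqrt_add_sqrt hdc)
    (fun _ hy => hasDerivAt_neg_log_sqrt_add_sqrt hdc hy) (intervalIntegrable_div_sqrt hd hdc)]
  have hcd : 0 < c - d := by linarith
  rw [sub_self, sqrt_zero, add_zero, zero_pow two_ne_zero, sub_zero, sub_zero,
    sqrt_sq (by linarith), sqrt_sq hd.le,
    show c ^ 2 - d ^ 2 = (c - d) * (c + d) by ring, sqrt_mul hcd.le,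
    log_div (by linarith) hcd.ne', log_mul (sqrt_pos.2 hcd).ne' (sqrt_pos.2 (by linarith)).ne',
    log_sqrt hcd.le, log_sqrt (by linarith)]
  ring

lemma sq_sub_div_sqrt (hd : 0 < d) (hdc : d < c) {y : ℝ} (hy : y ∈ Icc 0 d) :
    ((d - y) / (d * √((c ^ 2 - y ^ 2) * (d ^ 2 - y ^ 2)))) ^ 2
      = (d - y) / (d ^ 2 * (c - y) * (c + y) * (d + y)) := by
  obtain ⟨hy0, hyd⟩ := hy
  rcases hyd.eq_or_lt with rfl | hyd
  · simp
  have hcy : c - y ≠ 0 := by linarith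
  have hdy : d - y ≠ 0 := by linarith
  have hprod : (c ^ 2 - y ^ 2) * (d ^ 2 - y ^ 2) = (c - y) * (c + y) * ((d - y) * (d + y)) := by
    ring
  rw [div_pow, mul_pow, sq_sqrt (by rw [hprod]; exact mul_nonneg (by nlinarith) (by nlinarith)),
    hprod]
  field_simp

lemma abs_sub_div_sqrt_sub_le (hd : 0 < d) (hdc : d < c) {y : ℝ} (hy : y ∈ Icc 0 d) :
    |(d - y) / (d * √((c ^ 2 - y ^ 2) * (d ^ 2 - y ^ 2))) - (c * (c + y))⁻¹|
      ≤ 2 * c * (c - d) / d ^ 3 * (c - y)⁻¹ := by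
  obtain ⟨hy0, hyd⟩ := hy
  have hc : 0 < c := hd.trans hdc
  have hcd : 0 < c - d := by linarith
  have hcy : 0 < c - y := by linarith
  have hterm₁ : 0 ≤ (c + d) * (c * d - y ^ 2) ∧ (c + d) * (c * d - y ^ 2) ≤ 2 * c ^ 3 := by
    have : y ^ 2 ≤ c * d := by nlinarith
    exact ⟨by nlinarith, by nlinarith [mul_le_mul hdc.le hdc.le hd.le hc.le]⟩
  have hterm₂ : 0 ≤ y * (c ^ 2 + d ^ 2) ∧ y * (c ^ 2 + d ^ 2) ≤ 2 * c ^ 3 :=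
    ⟨by positivity, by nlinarith [mul_le_mul hdc.le hdc.le hd.le hc.le]⟩
  have hnum : |(c + d) * (c * d - y ^ 2) - y * (c ^ 2 + d ^ 2)| ≤ 2 * c ^ 3 := by
    rw [abs_le]
    constructor <;> linarith
  have hdiff : ((d - y) / (d * √((c ^ 2 - y ^ 2) * (d ^ 2 - y ^ 2)))) ^ 2 - (c * (c + y))⁻¹ ^ 2
      = (c - d) * ((c + d) * (c * d - y ^ 2) - y * (c ^ 2 + d ^ 2))
        / (c ^ 2 * d ^ 2 * (c - y) * (c + y) ^ 2 * (d + y)) := by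
    rw [sq_sub_div_sqrt hd hdc ⟨hy0, hyd⟩]
    field_simp
    ring
  calc _ ≤ _ := abs_sub_le_abs_sq_sub_sq_div (div_nonneg (by linarith) (by positivity))
        (by positivity)
    _ = (c - d) * |(c + d) * (c * d - y ^ 2) - y * (c ^ 2 + d ^ 2)|
          / (c * d ^ 2 * (c - y) * ((c + y) * (d + y))) := by
      have hD : 0 < c ^ 2 * d ^ 2 * (c - y) * (c + y) ^ 2 * (d + y) :=
        mul_pos (mul_pos (mul_pos (by positivity) hcy) (by positivity)) (by positivity)
      rw [hdiff, abs_div, abs_mul, abs_of_pos hcd, abs_of_pos hD, div_inv_eq_mul,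
        div_mul_eq_mul_div, div_eq_div_iff hD.ne' (by positivity)]
      ring
    _ ≤ (c - d) * (2 * c ^ 3) / (c * d ^ 2 * (c - y) * (c * d)) := by
      gcongr <;> linarith
    _ = 2 * c * (c - d) / d ^ 3 * (c - y)⁻¹ := by
      field_simp

lemma intervalIntegrable_inv_sub (hd : 0 < d) (hdc : d < c) :
    IntervalIntegrable (fun y => (c - y)⁻¹) volume 0 d := by
  refine intervalIntegrable_inv (fun y hy => ?_) (by fun_prop)
  rw [uIcc_of_le hd.le] at hy
  linarith [hy.2]

lemma integral_inv_sub (hd : 0 < d) (hdc : d < c) :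
    ∫ y in (0 : ℝ)..d, (c - y)⁻¹ = log (c / (c - d)) := by
  rw [integral_comp_sub_left (fun y => y⁻¹), sub_zero,
    integral_inv_of_pos (by linarith) (by linarith)]

lemma intervalIntegrable_inv_mul_add (hd : 0 < d) (hdc : d < c) :
    IntervalIntegrable (fun y => (c * (c + y))⁻¹) volume 0 d := by
  refine intervalIntegrable_inv (fun y hy => ?_) (by fun_prop)
  rw [uIcc_of_le hd.le] at hy
  have := hy.1
  have := hd.trans hdc
  positivity

lemma integral_inv_mul_add (hd : 0 < d) (hdc : d < c) :
    ∫ y in (0 : ℝ)..d, (c * (c + y))⁻¹ = log ((c + d) / c) / c := by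
  simp_rw [mul_inv]
  rw [intervalIntegral.integral_const_mul, integral_comp_add_left (fun y => y⁻¹), add_zero,
    integral_inv_of_pos (by linarith) (by linarith), inv_mul_eq_div]

lemma intervalIntegrable_sub_div_sqrt (hd : 0 < d) (hdc : d < c) :
    IntervalIntegrable (fun y => (d - y) / (d * √((c ^ 2 - y ^ 2) * (d ^ 2 - y ^ 2))))
      volume 0 d := by
  refine ((intervalIntegrable_inv_mul_add hd hdc).add
    ((intervalIntegrable_inv_sub hd hdc).const_mul (2 * c * (c - d) / d ^ 3))).of_abs_le hd.le
    (by fun_prop) fun y hy => ?_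
  have hc : 0 < c := hd.trans hdc
  have := hy.1
  have := abs_sub_abs_le_abs_sub ((d - y) / (d * √((c ^ 2 - y ^ 2) * (d ^ 2 - y ^ 2))))
    (c * (c + y))⁻¹
  rw [abs_of_pos (by positivity : 0 < (c * (c + y))⁻¹)] at this
  linarith [abs_sub_div_sqrt_sub_le hd hdc (Ioc_subset_Icc_self hy)]

lemma abs_integral_sub_div_sqrt_sub_le (hd : 0 < d) (hdc : d < c) :
    |(∫ y in (0 : ℝ)..d, (d - y) / (d * √((c ^ 2 - y ^ 2) * (d ^ 2 - y ^ 2))))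
        - log ((c + d) / c) / c|
      ≤ 2 * c * (c - d) / d ^ 3 * log (c / (c - d)) := by
  rw [← integral_inv_mul_add hd hdc, ← integral_inv_sub hd hdc,
    ← intervalIntegral.integral_const_mul, ← intervalIntegral.integral_sub
      (intervalIntegrable_sub_div_sqrt hd hdc) (intervalIntegrable_inv_mul_add hd hdc),
    ← norm_eq_abs]
  exact norm_integral_le_of_norm_le hd.le
    (ae_of_all _ fun y hy => abs_sub_div_sqrt_sub_le hd hdc (Ioc_subset_Icc_self hy))
    ((intervalIntegrable_inv_sub hd hdc).const_mul _)

lemma abs_I1_sub_le (hd : 0 < d) (hdc : d < c) :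
    |I1 c d - (log ((c + d) / (c - d)) / (2 * d) + log ((c + d) / c) / c)|
      ≤ 2 * c * (c - d) / d ^ 3 * log (c / (c - d)) := by
  have hsplit (y : ℝ) : 1 / √((c ^ 2 - y ^ 2) * (d ^ 2 - y ^ 2))
      = d⁻¹ * (y / √((c ^ 2 - y ^ 2) * (d ^ 2 - y ^ 2)))
        + (d - y) / (d * √((c ^ 2 - y ^ 2) * (d ^ 2 - y ^ 2))) := by
    rw [inv_mul_eq_div, div_div, mul_comm _ d, ← add_div, add_sub_cancel,
      div_mul_cancel_left₀ hd.ne', one_div]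
  have hI1 : I1 c d = log ((c + d) / (c - d)) / (2 * d)
      + ∫ y in (0 : ℝ)..d, (d - y) / (d * √((c ^ 2 - y ^ 2) * (d ^ 2 - y ^ 2))) := by
    rw [I1, funext hsplit, integral_add ((intervalIntegrable_div_sqrt hd hdc).const_mul _)
      (intervalIntegrable_sub_div_sqrt hd hdc), intervalIntegral.integral_const_mul,
      integral_div_sqrt hd hdc]
    ring
  rw [hI1, add_sub_add_left_eq_sub]
  exact abs_integral_sub_div_sqrt_sub_le hd hdc

end LogarithmicSingularity

lemma abs_I1_leading_term_sub_le {η : ℝ} (hη : 0 < η) (hη' : η ≤ 1 / 4) :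
    |log ((2 - η) / η) / (2 * (1 - η)) + log (2 - η) - log (8 / η) / 2|
      ≤ 3 / 2 * (η * log (1 / η)) := by
  have hL := one_le_log_one_div hη hη'
  have hl : 0 ≤ log (2 - η) ∧ log (2 - η) ≤ log 2 :=
    ⟨log_nonneg (by linarith), log_le_log (by linarith) (by linarith)⟩
  have hl' := log_two_sub_log_two_sub_le hη.le (by linarith)
  have h1η : 1 - η ≠ 0 := by linarith
  have hsplit : log ((2 - η) / η) / (2 * (1 - η)) + log (2 - η) - log (8 / η) / 2
      = (log (2 - η) + log (1 / η)) * (η / (2 * (1 - η))) - 3 / 2 * (log 2 - log (2 - η)) := by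
    rw [div_eq_mul_one_div (2 - η), show 8 / η = 2 ^ 3 * (1 / η) by ring,
      log_mul (by linarith) (by positivity), log_mul (by positivity) (by positivity), log_pow]
    field_simp
    ring
  have hcoef : η / (2 * (1 - η)) ≤ 2 / 3 * η := by
    rw [div_le_iff₀ (by linarith)]
    nlinarith
  have h₁ : 0 ≤ (log (2 - η) + log (1 / η)) * (η / (2 * (1 - η))) :=
    mul_nonneg (by linarith) (div_nonneg hη.le (by linarith))
  have h₁' :
      (log (2 - η) + log (1 / η)) * (η / (2 * (1 - η))) ≤ 3 / 2 * (η * log (1 / η)) := by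
    nlinarith [log_two_lt_d9]
  have h₂ : 3 / 2 * (log 2 - log (2 - η)) ≤ 3 / 2 * (η * log (1 / η)) := by
    nlinarith
  rw [hsplit, abs_le]
  constructor <;> nlinarith

lemma abs_I1_mul_one_sub_sub_le {c η : ℝ} (hc : 0 < c) (hη : 0 < η) (hη' : η ≤ 1 / 4) :
    |I1 c (c * (1 - η)) - 1 / (2 * c) * log (8 / η)| ≤ 7 / c * η * log (1 / η) := by
  have h1η : 1 - η ≠ 0 := by linarith
  have hd : 3 * c / 4 ≤ c * (1 - η) := by nlinarith
  have herr := abs_I1_sub_le (c := c) (d := c * (1 - η)) (by linarith) (by nlinarith)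
  rw [show c + c * (1 - η) = c * (2 - η) by ring, show c - c * (1 - η) = c * η by ring,
    mul_div_mul_left _ _ hc.ne', mul_div_cancel_left₀ _ hc.ne', div_mul_cancel_left₀ hc.ne',
    ← one_div] at herr
  have hmain :
      log ((2 - η) / η) / (2 * (c * (1 - η))) + log (2 - η) / c - 1 / (2 * c) * log (8 / η)
      = (log ((2 - η) / η) / (2 * (1 - η)) + log (2 - η) - log (8 / η) / 2) / c := by
    field_simp
  have hmain' := abs_I1_leading_term_sub_le hη hη'
  have hL := one_le_log_one_div hη hη'
  have hE :
      2 * c * (c * η) / (c * (1 - η)) ^ 3 * log (1 / η) ≤ 5 * (η * log (1 / η)) / c := by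
    have : (3 * c / 4) ^ 3 ≤ (c * (1 - η)) ^ 3 := pow_le_pow_left₀ (by positivity) hd 3
    rw [div_mul_eq_mul_div, div_le_div_iff₀ (pow_pos (by nlinarith) 3) hc]
    nlinarith [mul_le_mul_of_nonneg_left this (by positivity : 0 ≤ η * log (1 / η)),
      mul_nonneg (pow_pos hc 3).le (by positivity : 0 ≤ η * log (1 / η))]
  calc _ ≤ _ := abs_sub_le _ (log ((2 - η) / η) / (2 * (c * (1 - η))) + log (2 - η) / c) _
    _ ≤ 5 * (η * log (1 / η)) / c + 3 / 2 * (η * log (1 / η)) / c := by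
      rw [hmain, abs_div, abs_of_pos hc]
      exact add_le_add (herr.trans hE) (div_le_div_of_nonneg_right hmain' hc.le)
    _ ≤ 7 * (η * log (1 / η)) / c := by
      rw [← add_div]
      exact div_le_div_of_nonneg_right (by nlinarith [mul_pos hη (zero_lt_one.trans_le hL)]) hc.le
    _ = 7 / c * η * log (1 / η) := by ring

theorem stmt7 (c : ℝ) (hc : 0 < c) :
    ∃ C > 0, ∃ η₀ > 0, ∀ η : ℝ, 0 < η → η < η₀ →
      |I0 c (c * (1 - η)) - Real.pi / (2*c)| ≤ C * η ∧
      |I1 c (c * (1 - η)) - (1/(2*c)) * Real.log (8/η)| ≤ C * η * Real.log (1/η) := by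
  refine ⟨7 / c, by positivity, 1 / 4, by norm_num, fun η hη hη' =>
    ⟨?_, abs_I1_mul_one_sub_sub_le hc hη hη'.le⟩⟩
  calc _ ≤ π / c * η := abs_I0_mul_one_sub_sub_le hc hη (by linarith)
    _ ≤ 7 / c * η := by gcongr; linarith [pi_lt_four]
end

section
/- Let c>0 and for 0<d≤c let μ(d)≥0 be defined by μ²(d) = (∫₀^d y²·√((d²−y²)/(c²−y²)) dy)/(∫₀^d √((d²−y²)/(c²−y²)) dy). Then μ²(c(1−η)) = c²·(1/3 − (1/3)·η·log(8/(η·e²))) + O(η²·log²η) as η→0⁺; that is, there exist constants C>0 and η₀>0 such that |μ²(c(1−η)) − c²/3 + (c²/3)·η·log(8/(η·e²))| ≤ C·η²·(log(1/η))² for all 0<η<η₀. -/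
/-- `μ²(d) = (∫₀^d y²·√((d²−y²)/(c²−y²)) dy)/(∫₀^d √((d²−y²)/(c²−y²)) dy)`. -/
noncomputable def mu2 (c d : ℝ) : ℝ :=
  (∫ y in (0:ℝ)..d, y^2 * Real.sqrt ((d^2 - y^2) / (c^2 - y^2))) /
    (∫ y in (0:ℝ)..d, Real.sqrt ((d^2 - y^2) / (c^2 - y^2)))

/-!
After the substitution `y = c t` one has `μ²(c k) = c² (D - G) / D` with
`D = ∫₀^k √((k²-t²)/(1-t²)) dt` and `G = ∫₀^k √((k²-t²)(1-t²)) dt`.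
Writing `A = √(1-t²)`, `B = √(k²-t²)` and `m = 1 - k² = A² - B²`, the identity
`A - B = m / (A + B)` gives
`B/A = 1 - m (1 + r) / (2A²)` and `AB = A² - m (1 + r) / 2`, where `r = m / (A + B)²`
satisfies `0 ≤ r ≤ m / (1 - t)`. Everything except `r` integrates in closed form (to logarithms),
and `∫₀^k r ≤ m log (1/(1-k))`.
For `k = 1 - η` this gives `D = 1 - (η/2)(1 + log (8/η)) + O(η² log (1/η))` and
`G = 2/3 - η + O(η² log (1/η))`, and expanding the ratio gives the claim.
-/

open Real intervalIntegral Set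
open MeasureTheory (volume)

lemma mu2_mul_left {c : ℝ} (hc : c ≠ 0) (d : ℝ) : mu2 c (c * d) = c ^ 2 * mu2 1 d := by
  have hscale : ∀ t, ((c * d) ^ 2 - (c * t) ^ 2) / (c ^ 2 - (c * t) ^ 2)
      = (d ^ 2 - t ^ 2) / (1 ^ 2 - t ^ 2) := fun t => by
    rw [one_pow, show (c * d) ^ 2 - (c * t) ^ 2 = c ^ 2 * (d ^ 2 - t ^ 2) by ring,
      show c ^ 2 - (c * t) ^ 2 = c ^ 2 * (1 - t ^ 2) by ring,
      mul_div_mul_left _ _ (pow_ne_zero 2 hc)]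
  have hnum := smul_integral_comp_mul_left
    (fun y => y ^ 2 * √(((c * d) ^ 2 - y ^ 2) / (c ^ 2 - y ^ 2))) c (a := 0) (b := d)
  have hden := smul_integral_comp_mul_left
    (fun y => √(((c * d) ^ 2 - y ^ 2) / (c ^ 2 - y ^ 2))) c (a := 0) (b := d)
  have hsq : ∀ t, (c * t) ^ 2 * √((d ^ 2 - t ^ 2) / (1 ^ 2 - t ^ 2))
      = c ^ 2 * (t ^ 2 * √((d ^ 2 - t ^ 2) / (1 ^ 2 - t ^ 2))) := fun t => by ring
  simp only [mul_zero, hscale, hsq, smul_eq_mul, intervalIntegral.integral_const_mul] at hnum hden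
  rw [mu2, mu2, ← hnum, ← hden, mul_div_mul_left _ _ hc, mul_div_assoc]

noncomputable def denomInt (k : ℝ) : ℝ := ∫ t in (0:ℝ)..k, √((k ^ 2 - t ^ 2) / (1 - t ^ 2))

noncomputable def gapInt (k : ℝ) : ℝ := ∫ t in (0:ℝ)..k, √((k ^ 2 - t ^ 2) * (1 - t ^ 2))

noncomputable def remainder (k t : ℝ) : ℝ :=
  (1 - k ^ 2) / (√(1 - t ^ 2) + √(k ^ 2 - t ^ 2)) ^ 2

lemma one_sub_sq_pos_of_mem_Icc {k t : ℝ} (hk1 : k < 1) (ht : t ∈ Icc 0 k) : 0 < 1 - t ^ 2 := by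
  nlinarith [ht.1, ht.2]

lemma sq_sub_sq_nonneg_of_mem_Icc {k t : ℝ} (ht : t ∈ Icc 0 k) : 0 ≤ k ^ 2 - t ^ 2 := by
  nlinarith [ht.1, ht.2]

lemma sqrt_add_sqrt_pos {k t : ℝ} (hk1 : k < 1) (ht : t ∈ Icc 0 k) :
    0 < √(1 - t ^ 2) + √(k ^ 2 - t ^ 2) :=
  add_pos_of_pos_of_nonneg (sqrt_pos.2 (one_sub_sq_pos_of_mem_Icc hk1 ht)) (sqrt_nonneg _)

lemma continuousOn_weight {k : ℝ} (hk1 : k < 1) :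
    ContinuousOn (fun t => √((k ^ 2 - t ^ 2) / (1 - t ^ 2))) (Icc 0 k) := by
  fun_prop (disch := exact fun t ht => (one_sub_sq_pos_of_mem_Icc hk1 ht).ne')

lemma continuousOn_remainder {k : ℝ} (hk1 : k < 1) : ContinuousOn (remainder k) (Icc 0 k) :=
  continuousOn_const.div (by fun_prop) fun t ht => (pow_pos (sqrt_add_sqrt_pos hk1 ht) 2).ne'

lemma continuousOn_remainder_div {k : ℝ} (hk1 : k < 1) :
    ContinuousOn (fun t => remainder k t / (1 + t)) (Icc 0 k) :=
  (continuousOn_remainder hk1).div (by fun_prop) fun t ht => by linarith [ht.1]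

lemma div_eq_one_sub_of_pos {A B : ℝ} (hA : 0 < A) (hB : 0 ≤ B) :
    B / A = 1 - (A ^ 2 - B ^ 2) / (2 * A ^ 2) * (1 + (A ^ 2 - B ^ 2) / (A + B) ^ 2) := by
  have : 0 < A + B := by positivity
  field_simp
  ring

lemma mul_eq_sq_sub_of_pos {A B : ℝ} (hA : 0 < A) (hB : 0 ≤ B) :
    A * B = A ^ 2 - (A ^ 2 - B ^ 2) / 2 * (1 + (A ^ 2 - B ^ 2) / (A + B) ^ 2) := by
  have : 0 < A + B := by positivity
  field_simp
  ring

lemma sqrt_div_eq_one_sub_remainder {k t : ℝ} (hk1 : k < 1) (ht : t ∈ Icc 0 k) :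
    √((k ^ 2 - t ^ 2) / (1 - t ^ 2))
      = 1 - (1 - k ^ 2) / (2 * (1 - t ^ 2)) * (1 + remainder k t) := by
  have hA := one_sub_sq_pos_of_mem_Icc hk1 ht
  have hB := sq_sub_sq_nonneg_of_mem_Icc ht
  rw [sqrt_div hB, div_eq_one_sub_of_pos (sqrt_pos.2 hA) (sqrt_nonneg _), sq_sqrt hA.le,
    sq_sqrt hB, remainder]
  ring_nf

lemma sqrt_mul_eq_sub_remainder {k t : ℝ} (hk1 : k < 1) (ht : t ∈ Icc 0 k) :
    √((k ^ 2 - t ^ 2) * (1 - t ^ 2)) = (1 - t ^ 2) - (1 - k ^ 2) / 2 * (1 + remainder k t) := by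
  have hA := one_sub_sq_pos_of_mem_Icc hk1 ht
  have hB := sq_sub_sq_nonneg_of_mem_Icc ht
  rw [mul_comm, sqrt_mul hA.le, mul_eq_sq_sub_of_pos (sqrt_pos.2 hA) (sqrt_nonneg _),
    sq_sqrt hA.le, sq_sqrt hB, remainder]
  ring_nf

lemma remainder_nonneg {k t : ℝ} (hk1 : k < 1) (ht : t ∈ Icc 0 k) : 0 ≤ remainder k t := by
  unfold remainder
  have : 0 ≤ 1 - k ^ 2 := by nlinarith [ht.1, ht.2]
  positivity

lemma remainder_le {k t : ℝ} (hk1 : k < 1) (ht : t ∈ Icc 0 k) :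
    remainder k t ≤ (1 - k ^ 2) / (1 - t) := by
  have hA := one_sub_sq_pos_of_mem_Icc hk1 ht
  have hm : 0 ≤ 1 - k ^ 2 := by nlinarith [ht.1, ht.2]
  have hS : 1 - t ≤ (√(1 - t ^ 2) + √(k ^ 2 - t ^ 2)) ^ 2 := by
    nlinarith [sq_sqrt hA.le, sqrt_nonneg (1 - t ^ 2), sqrt_nonneg (k ^ 2 - t ^ 2), ht.1, ht.2]
  exact div_le_div_of_nonneg_left hm (by linarith [ht.2]) hS

lemma integral_one_div_one_add {k : ℝ} (hk : -1 < k) :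
    ∫ t in (0:ℝ)..k, 1 / (1 + t) = log (1 + k) := by
  have h := integral_comp_add_right (fun x : ℝ => 1 / x) (a := 0) (b := k) 1
  rw [zero_add, integral_one_div (notMem_uIcc_of_lt one_pos (by linarith))] at h
  simpa [add_comm] using h

lemma integral_one_div_one_sub {k : ℝ} (hk : k < 1) :
    ∫ t in (0:ℝ)..k, 1 / (1 - t) = -log (1 - k) := by
  have h := integral_comp_sub_left (fun x : ℝ => 1 / x) (a := 0) (b := k) 1
  rw [sub_zero, integral_one_div (notMem_uIcc_of_lt (by linarith) one_pos)] at h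
  simpa [log_inv] using h

lemma integral_mul_weight {k : ℝ} (hk0 : 0 ≤ k) (hk1 : k < 1) :
    ∫ t in (0:ℝ)..k, t * √((k ^ 2 - t ^ 2) / (1 - t ^ 2))
      = k / 2 - (1 - k ^ 2) / 4 * (log (1 + k) - log (1 - k)) := by
  set ψ : ℝ → ℝ := fun t => -(√(1 - t ^ 2) * √(k ^ 2 - t ^ 2)) / 2
    + (1 - k ^ 2) / 2 * log (√(1 - t ^ 2) + √(k ^ 2 - t ^ 2)) with hψ
  have hcont : ContinuousOn ψ (Icc 0 k) :=
    (by fun_prop : Continuous fun t => -(√(1 - t ^ 2) * √(k ^ 2 - t ^ 2)) / 2).continuousOn.add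
      (continuousOn_const.mul (ContinuousOn.log (by fun_prop)
        fun t ht => (sqrt_add_sqrt_pos hk1 ht).ne'))
  have hderiv : ∀ x ∈ Ioo 0 k, HasDerivWithinAt ψ (x * √((k ^ 2 - x ^ 2) / (1 - x ^ 2)))
      (Ioi x) x := by
    intro x hx
    have ha : 0 < 1 - x ^ 2 := one_sub_sq_pos_of_mem_Icc hk1 (Ioo_subset_Icc_self hx)
    have hb : 0 < k ^ 2 - x ^ 2 := by nlinarith [hx.1, hx.2]
    have hA := sqrt_pos.2 ha
    have hB := sqrt_pos.2 hb
    have dA : HasDerivAt (fun t => √(1 - t ^ 2)) (-(2 * x) / (2 * √(1 - x ^ 2))) x := by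
      simpa using ((hasDerivAt_pow 2 x).const_sub 1).sqrt ha.ne'
    have dB : HasDerivAt (fun t => √(k ^ 2 - t ^ 2)) (-(2 * x) / (2 * √(k ^ 2 - x ^ 2))) x := by
      simpa using ((hasDerivAt_pow 2 x).const_sub (k ^ 2)).sqrt hb.ne'
    have dψ := ((dA.mul dB).neg.div_const 2).add
      (((dA.add dB).log (add_pos hA hB).ne').const_mul ((1 - k ^ 2) / 2))
    refine (dψ.congr_deriv ?_).hasDerivWithinAt
    simp only [Pi.add_apply]
    rw [sqrt_div hb.le]
    have hm : 1 - k ^ 2 = √(1 - x ^ 2) ^ 2 - √(k ^ 2 - x ^ 2) ^ 2 := by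
      rw [sq_sqrt ha.le, sq_sqrt hb.le]; ring
    rw [hm]
    field_simp
    ring
  rw [integral_eq_sub_of_hasDeriv_right_of_le hk0 hcont hderiv
    ((continuousOn_id.mul (continuousOn_weight hk1)).intervalIntegrable_of_Icc hk0)]
  have h1k : 0 < 1 - k := by linarith
  have hlog : log (√(1 - k ^ 2)) = (log (1 - k) + log (1 + k)) / 2 := by
    rw [log_sqrt (by nlinarith), show 1 - k ^ 2 = (1 - k) * (1 + k) by ring,
      log_mul h1k.ne' (by linarith)]
  simp only [hψ, sub_self, sqrt_zero, mul_zero, add_zero, hlog]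
  rw [show k ^ 2 - 0 ^ 2 = k ^ 2 by ring, sqrt_sq hk0, show (1:ℝ) - 0 ^ 2 = 1 by ring, sqrt_one]
  ring

lemma mu2_one_eq {k : ℝ} (hk0 : 0 ≤ k) (hk1 : k < 1) :
    mu2 1 k = (denomInt k - gapInt k) / denomInt k := by
  have hnum : ∫ t in (0:ℝ)..k, t ^ 2 * √((k ^ 2 - t ^ 2) / (1 ^ 2 - t ^ 2))
      = ∫ t in (0:ℝ)..k,
          (√((k ^ 2 - t ^ 2) / (1 - t ^ 2)) - √((k ^ 2 - t ^ 2) * (1 - t ^ 2))) := by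
    refine integral_congr fun t ht => ?_
    rw [uIcc_of_le hk0] at ht
    have hA := one_sub_sq_pos_of_mem_Icc hk1 ht
    have hB := sq_sub_sq_nonneg_of_mem_Icc ht
    have hsA := sqrt_pos.2 hA
    simp only [one_pow]
    rw [sqrt_div hB, sqrt_mul hB]
    field_simp
    linear_combination √(k ^ 2 - t ^ 2) * sq_sqrt hA.le
  rw [mu2, hnum, integral_sub ((continuousOn_weight hk1).intervalIntegrable_of_Icc hk0)
    ((by fun_prop : Continuous fun t : ℝ => √((k ^ 2 - t ^ 2) * (1 - t ^ 2))).intervalIntegrable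
      _ _)]
  simp only [one_pow, denomInt, gapInt]

lemma gapInt_eq {k : ℝ} (hk0 : 0 ≤ k) (hk1 : k < 1) :
    gapInt k = k - k ^ 3 / 3 - (1 - k ^ 2) / 2 * (k + ∫ t in (0:ℝ)..k, remainder k t) := by
  have hr := (continuousOn_remainder hk1).intervalIntegrable_of_Icc (μ := volume) hk0
  rw [gapInt, integral_congr fun t ht => sqrt_mul_eq_sub_remainder hk1 (uIcc_of_le hk0 ▸ ht),
    integral_sub ((by fun_prop : Continuous fun t : ℝ => 1 - t ^ 2).intervalIntegrable _ _)
      ((intervalIntegrable_const.add hr).const_mul _),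
    integral_const_mul, integral_add intervalIntegrable_const hr,
    integral_sub intervalIntegrable_const ((continuous_pow 2).intervalIntegrable _ _),
    integral_pow]
  simp only [integral_const, sub_zero, smul_eq_mul, mul_one]
  ring

lemma denomInt_eq {k : ℝ} (hk0 : 0 ≤ k) (hk1 : k < 1) :
    denomInt k = 3 * k / 2 - k ^ 2 / 2 - (1 - k ^ 2) / 4 * (3 * log (1 + k) - log (1 - k))
      - (1 - k ^ 2) / 2 * ∫ t in (0:ℝ)..k, remainder k t / (1 + t) := by
  -- Multiplied by `1 - t`, the expansion has only `1 + t` in its denominators, and the extra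
  -- `t · √(…)` integrates exactly; integrating `r / (1 - t²)` would not give a small error.
  have hw : EqOn (fun t => √((k ^ 2 - t ^ 2) / (1 - t ^ 2)))
      (fun t => (1 - t) + t * √((k ^ 2 - t ^ 2) / (1 - t ^ 2))
        - (1 - k ^ 2) / 2 * (1 / (1 + t) + remainder k t / (1 + t))) (uIcc 0 k) := by
    intro t ht
    rw [uIcc_of_le hk0] at ht
    have hA := one_sub_sq_pos_of_mem_Icc hk1 ht
    have h1t : 0 < 1 + t := by linarith [ht.1]
    simp only [sqrt_div_eq_one_sub_remainder hk1 ht]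
    field_simp
    ring
  have hinv : IntervalIntegrable (fun t : ℝ => 1 / (1 + t)) volume 0 k :=
    (continuousOn_const.div (by fun_prop) fun t ht => by linarith [ht.1]).intervalIntegrable_of_Icc
      hk0
  have hrd := (continuousOn_remainder_div hk1).intervalIntegrable_of_Icc (μ := volume) hk0
  have htw : IntervalIntegrable (fun t => t * √((k ^ 2 - t ^ 2) / (1 - t ^ 2)))
      volume 0 k :=
    (continuousOn_id.mul (continuousOn_weight hk1)).intervalIntegrable_of_Icc hk0
  rw [denomInt, integral_congr hw,
    integral_sub (((by fun_prop : Continuous fun t : ℝ => 1 - t).intervalIntegrable _ _).add htw)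
      ((hinv.add hrd).const_mul _),
    integral_add ((by fun_prop : Continuous fun t : ℝ => 1 - t).intervalIntegrable _ _) htw,
    intervalIntegral.integral_const_mul, integral_add hinv hrd,
    integral_sub intervalIntegrable_const intervalIntegrable_id, integral_id,
    integral_mul_weight hk0 hk1, integral_one_div_one_add (by linarith)]
  simp only [integral_const, sub_zero, smul_eq_mul, mul_one]
  ring

lemma integral_remainder_nonneg {k : ℝ} (hk0 : 0 ≤ k) (hk1 : k < 1) :
    0 ≤ ∫ t in (0:ℝ)..k, remainder k t :=
  integral_nonneg hk0 fun _ ht => remainder_nonneg hk1 ht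

lemma integral_remainder_le {k : ℝ} (hk0 : 0 ≤ k) (hk1 : k < 1) :
    ∫ t in (0:ℝ)..k, remainder k t ≤ (1 - k ^ 2) * -log (1 - k) := by
  rw [← integral_one_div_one_sub hk1, ← intervalIntegral.integral_const_mul]
  refine integral_mono_on hk0 ((continuousOn_remainder hk1).intervalIntegrable_of_Icc hk0)
    ((continuousOn_const.mul (continuousOn_const.div (by fun_prop)
      fun t ht => by linarith [ht.2])).intervalIntegrable_of_Icc hk0) fun t ht => ?_
  rw [mul_one_div]
  exact remainder_le hk1 ht

lemma integral_remainder_div_nonneg {k : ℝ} (hk0 : 0 ≤ k) (hk1 : k < 1) :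
    0 ≤ ∫ t in (0:ℝ)..k, remainder k t / (1 + t) :=
  integral_nonneg hk0 fun t ht => div_nonneg (remainder_nonneg hk1 ht) (by linarith [ht.1])

lemma integral_remainder_div_le {k : ℝ} (hk0 : 0 ≤ k) (hk1 : k < 1) :
    ∫ t in (0:ℝ)..k, remainder k t / (1 + t) ≤ ∫ t in (0:ℝ)..k, remainder k t :=
  integral_mono_on hk0 ((continuousOn_remainder_div hk1).intervalIntegrable_of_Icc hk0)
    ((continuousOn_remainder hk1).intervalIntegrable_of_Icc hk0) fun t ht =>
    div_le_self (remainder_nonneg hk1 ht) (by linarith [ht.1])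

lemma four_lt_log_one_div {η : ℝ} (hη0 : 0 < η) (hη1 : η < 1 / 100) : 4 < log (1 / η) := by
  have h64 : (2:ℝ) ^ 6 < 1 / η := by rw [lt_div_iff₀ hη0]; linarith
  have := log_lt_log (by norm_num) h64
  rw [log_pow] at this
  linarith [log_two_gt_d9]

lemma mul_log_one_div_lt_one {η : ℝ} (hη0 : 0 < η) (hη1 : η ≤ 1) : η * log (1 / η) < 1 := by
  have h := abs_log_mul_self_lt η hη0 hη1
  rw [one_div, log_inv]
  linarith [neg_abs_le (log η * η)]

lemma log_two_sub_mem_Icc {η : ℝ} (hη0 : 0 ≤ η) (hη1 : η ≤ 1) :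
    log (2 - η) ∈ Icc (log 2 - η) (log 2) := by
  have h2η : 0 < 2 - η := by linarith
  refine ⟨?_, log_le_log h2η (by linarith)⟩
  have h := log_le_sub_one_of_pos (show 0 < 2 / (2 - η) by positivity)
  rw [log_div two_ne_zero h2η.ne'] at h
  have : 2 / (2 - η) - 1 ≤ η := by
    rw [div_sub_one h2η.ne', div_le_iff₀ h2η]; nlinarith
  linarith

lemma integral_remainder_one_sub_le {η : ℝ} (hη0 : 0 < η) (hη1 : η ≤ 1) :
    ∫ t in (0:ℝ)..1 - η, remainder (1 - η) t ≤ 2 * η * log (1 / η) := by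
  have h := integral_remainder_le (k := 1 - η) (by linarith) (by linarith)
  have hℓ : 0 ≤ log (1 / η) := log_nonneg (by rw [le_div_iff₀ hη0]; linarith)
  rw [show 1 - (1 - η) = η by ring, ← log_inv, ← one_div] at h
  nlinarith [mul_nonneg (sq_nonneg η) hℓ]

lemma denomInt_one_sub_approx {η : ℝ} (hη0 : 0 < η) (hη1 : η < 1 / 100) :
    |denomInt (1 - η) - (1 - η / 2 * (1 + 3 * log 2 + log (1 / η)))|
      ≤ 4 * η ^ 2 * log (1 / η) := by
  have hk0 : 0 ≤ 1 - η := by linarith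
  have hk1 : 1 - η < 1 := by linarith
  have hℓ := four_lt_log_one_div hη0 hη1
  obtain ⟨hβ0, hβ1⟩ := log_two_sub_mem_Icc hη0.le (by linarith)
  have hβ : 0 ≤ log (2 - η) := log_nonneg (by linarith)
  have hS0 := integral_remainder_div_nonneg hk0 hk1
  have hS := (integral_remainder_div_le hk0 hk1).trans
    (integral_remainder_one_sub_le hη0 (by linarith))
  rw [denomInt_eq hk0 hk1, show 1 + (1 - η) = 2 - η by ring, show 1 - (1 - η) = η by ring,
    show log η = -log (1 / η) by rw [one_div, log_inv, neg_neg]]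
  set ℓ := log (1 / η)
  set S := ∫ t in (0:ℝ)..1 - η, remainder (1 - η) t / (1 + t)
  set β := log (2 - η)
  have hηS : η * S ≤ 2 * η ^ 2 * ℓ := by nlinarith [mul_le_mul_of_nonneg_left hS hη0.le]
  have hη2S : η ^ 2 * S ≤ η * S := by nlinarith [mul_nonneg hη0.le hS0]
  have hηβ : η * log 2 - η ^ 2 ≤ η * β := by nlinarith [mul_le_mul_of_nonneg_left hβ0 hη0.le]
  have hηβ' : η * β ≤ η * log 2 := mul_le_mul_of_nonneg_left hβ1 hη0.le
  have hη2β : η ^ 2 * β ≤ η ^ 2 := by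
    nlinarith [log_two_lt_d9, mul_le_mul_of_nonneg_left hβ1 (sq_nonneg η)]
  have hη2ℓ : 4 * η ^ 2 ≤ η ^ 2 * ℓ := by
    nlinarith [mul_le_mul_of_nonneg_left hℓ.le (sq_nonneg η)]
  rw [abs_le]
  constructor <;> nlinarith [mul_nonneg (sq_nonneg η) hβ, mul_nonneg hη0.le hS0]

lemma gapInt_one_sub_approx {η : ℝ} (hη0 : 0 < η) (hη1 : η < 1 / 100) :
    |gapInt (1 - η) - (2 / 3 - η)| ≤ 3 * η ^ 2 * log (1 / η) := by
  have hk0 : 0 ≤ 1 - η := by linarith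
  have hk1 : 1 - η < 1 := by linarith
  have hℓ := four_lt_log_one_div hη0 hη1
  have hR0 := integral_remainder_nonneg hk0 hk1
  have hR := integral_remainder_one_sub_le hη0 (by linarith)
  rw [gapInt_eq hk0 hk1]
  set ℓ := log (1 / η)
  set R := ∫ t in (0:ℝ)..1 - η, remainder (1 - η) t
  have hηR : η * R ≤ 2 * η ^ 2 * ℓ := by nlinarith [mul_le_mul_of_nonneg_left hR hη0.le]
  have hη2R : η ^ 2 * R ≤ η * R := by nlinarith [mul_nonneg hη0.le hR0]
  have hη2ℓ : 4 * η ^ 2 ≤ η ^ 2 * ℓ := by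
    nlinarith [mul_le_mul_of_nonneg_left hℓ.le (sq_nonneg η)]
  rw [abs_le]
  constructor <;> nlinarith [mul_nonneg hη0.le hR0, pow_pos hη0 3]

lemma abs_div_sub_le_of_approx {D G D₀ G₀ T ε : ℝ} (hD : |D - D₀| ≤ ε) (hG : |G - G₀| ≤ ε)
    (hD_pos : 2 / 5 ≤ D) (hT0 : 0 ≤ T) (hT2 : T ≤ 2) :
    |(D - G) / D - (1 - T)| ≤ 5 / 2 * (3 * ε + |T * D₀ - G₀|) := by
  have hD0 : 0 < D := by linarith
  have hnum : |T * D - G| ≤ 3 * ε + |T * D₀ - G₀| := by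
    have hTD : |T * (D - D₀)| ≤ 2 * ε := by
      rw [abs_mul, abs_of_nonneg hT0]
      nlinarith [abs_nonneg (D - D₀)]
    calc |T * D - G| = |T * (D - D₀) + (T * D₀ - G₀) + (G₀ - G)| := by ring_nf
      _ ≤ |T * (D - D₀)| + |T * D₀ - G₀| + |G₀ - G| := abs_add_three ..
      _ ≤ 3 * ε + |T * D₀ - G₀| := by rw [abs_sub_comm G₀]; linarith
  have hε : 0 ≤ 3 * ε + |T * D₀ - G₀| := by
    linarith [abs_nonneg (D - D₀), abs_nonneg (T * D₀ - G₀)]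
  rw [show (D - G) / D - (1 - T) = (T * D - G) / D by field_simp; ring, abs_div, abs_of_pos hD0,
    div_le_iff₀ hD0]
  nlinarith [mul_le_mul_of_nonneg_left hD_pos hε]

lemma mu2_one_one_sub_approx {η : ℝ} (hη0 : 0 < η) (hη1 : η < 1 / 100) :
    |mu2 1 (1 - η) - (1 / 3 - 1 / 3 * η * (3 * log 2 + log (1 / η) - 2))|
      ≤ 9 * η ^ 2 * log (1 / η) ^ 2 := by
  have hℓ := four_lt_log_one_div hη0 hη1
  have hηℓ := mul_log_one_div_lt_one hη0 (by linarith)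
  have hD := denomInt_one_sub_approx hη0 hη1
  have hG := (gapInt_one_sub_approx hη0 hη1).trans
    (by nlinarith [mul_pos (pow_pos hη0 2) (by linarith : 0 < log (1 / η))] :
      3 * η ^ 2 * log (1 / η) ≤ 4 * η ^ 2 * log (1 / η))
  set ℓ := log (1 / η)
  have hlog2 := log_two_lt_d9
  have hlog2' := log_two_gt_d9
  rw [mu2_one_eq (by linarith) (by linarith),
    show 1 / 3 - 1 / 3 * η * (3 * log 2 + ℓ - 2) = 1 - (2 / 3 + η / 3 * (3 * log 2 + ℓ - 2)) by
      ring]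
  refine (abs_div_sub_le_of_approx hD hG ?_ ?_ ?_).trans ?_
  · have := (abs_le.1 hD).1
    nlinarith [mul_lt_mul_of_pos_left hηℓ hη0]
  · nlinarith
  · nlinarith
  · have hP0 : 0 ≤ (3 * log 2 + ℓ - 2) * (1 + 3 * log 2 + ℓ) :=
      mul_nonneg (by linarith) (by linarith)
    have hP : (3 * log 2 + ℓ - 2) * (1 + 3 * log 2 + ℓ) ≤ 2 * ℓ ^ 2 := by nlinarith
    rw [show (2 / 3 + η / 3 * (3 * log 2 + ℓ - 2)) * (1 - η / 2 * (1 + 3 * log 2 + ℓ))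
        - (2 / 3 - η) = -(η ^ 2 / 6 * ((3 * log 2 + ℓ - 2) * (1 + 3 * log 2 + ℓ))) by ring, abs_neg,
      abs_of_nonneg (by positivity)]
    nlinarith [mul_le_mul_of_nonneg_left hP (sq_nonneg η),
      mul_le_mul_of_nonneg_left hℓ.le (mul_nonneg (sq_nonneg η) (by linarith : 0 ≤ ℓ))]

theorem stmt10 (c : ℝ) (hc : 0 < c) :
    ∃ C > 0, ∃ η₀ > 0, ∀ η : ℝ, 0 < η → η < η₀ →
      |mu2 c (c * (1 - η)) -
          c^2 * (1/3 - (1/3) * η * Real.log (8 / (η * Real.exp 1 ^ 2)))|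
        ≤ C * η^2 * (Real.log (1/η))^2 := by
  refine ⟨9 * c ^ 2, by positivity, 1 / 100, by norm_num, fun η hη0 hη1 => ?_⟩
  have hlog : log (8 / (η * exp 1 ^ 2)) = 3 * log 2 + log (1 / η) - 2 := by
    rw [log_div (by norm_num) (by positivity), log_mul hη0.ne' (by positivity), log_pow, log_exp,
      show (8 : ℝ) = 2 ^ 3 by norm_num, log_pow, one_div, log_inv]
    push_cast
    ring
  calc |mu2 c (c * (1 - η)) - c ^ 2 * (1 / 3 - 1 / 3 * η * log (8 / (η * exp 1 ^ 2)))|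
      = c ^ 2 * |mu2 1 (1 - η) - (1 / 3 - 1 / 3 * η * (3 * log 2 + log (1 / η) - 2))| := by
        rw [mu2_mul_left hc.ne', hlog, ← mul_sub, abs_mul, abs_of_pos (by positivity)]
    _ ≤ c ^ 2 * (9 * η ^ 2 * log (1 / η) ^ 2) := by
        gcongr
        exact mu2_one_one_sub_approx hη0 hη1
    _ = 9 * c ^ 2 * η ^ 2 * log (1 / η) ^ 2 := by ring
end
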